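/- arXiv:2101.00626 — 9 statements merged into one kernel-verified Lean document; each statement's English description precedes it below -/
import Mathlib

section
/- Let T = T(l) be a labeled tree. The function d_l is an ultrametric on V(T) if and only if max{l(u), l(v)} > 0 holds for every edge {u, v} ∈ E(T). -/
open SimpleGraph Filter

/-- `d` is the distance pinned by labeling `l` on graph `G`: zero on the diagonal and
otherwise the maximum of the labels over (any, hence the unique) path joining the points. -/
def PinnedDist {V : Type} (G : SimpleGraph V) (l : V → ℝ) (d : V → V → ℝ) : Prop :=
  (∀ u : V, d u u = 0) ∧
  ∀ u v : V, u ≠ v → ∀ p : G.Walk u v, p.IsPath →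
    d u v = (p.support.map l).foldr max 0

/-- A nonnegative labeling with `max (l u) (l v) > 0` on every edge. -/
def NondegLabeling {V : Type} (G : SimpleGraph V) (l : V → ℝ) : Prop :=
  (∀ v, 0 ≤ l v) ∧ ∀ u v : V, G.Adj u v → 0 < max (l u) (l v)

/-- Cauchy sequence with respect to a distance function. -/
def CauchyWith {V : Type} (d : V → V → ℝ) (x : ℕ → V) : Prop :=
  ∀ ε : ℝ, 0 < ε → ∃ N : ℕ, ∀ m ≥ N, ∀ n ≥ N, d (x m) (x n) < ε

/-- Convergence of a sequence to a point with respect to a distance function. -/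
def TendstoWith {V : Type} (d : V → V → ℝ) (x : ℕ → V) (a : V) : Prop :=
  ∀ ε : ℝ, 0 < ε → ∃ N : ℕ, ∀ n ≥ N, d (x n) a < ε

/-- Completeness: every Cauchy sequence converges. -/
def CompleteWith {V : Type} (d : V → V → ℝ) : Prop :=
  ∀ x : ℕ → V, CauchyWith d x → ∃ a : V, TendstoWith d x a

/-- Discreteness: every point is isolated. -/
def DiscreteWith {V : Type} (d : V → V → ℝ) : Prop :=
  ∀ p : V, ∃ ε : ℝ, 0 < ε ∧ ∀ x : V, x ≠ p → ε ≤ d p x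

/-- Total boundedness: finitely many open balls of any positive radius cover the space. -/
def TotallyBoundedWith {V : Type} (d : V → V → ℝ) : Prop :=
  ∀ r : ℝ, 0 < r → ∃ S : Finset V, ∀ v : V, ∃ c ∈ S, d c v < r

/-- Sequential compactness: every sequence has a convergent subsequence. -/
def SeqCompactWith {V : Type} (d : V → V → ℝ) : Prop :=
  ∀ x : ℕ → V, ∃ a : V, ∃ φ : ℕ → ℕ, StrictMono φ ∧ TendstoWith d (x ∘ φ) a

/-- `x` enumerates a ray contained in `G`: distinct vertices, consecutive ones adjacent. -/
def IsRayIn {V : Type} (G : SimpleGraph V) (x : ℕ → V) : Prop :=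
  Function.Injective x ∧ ∀ n : ℕ, G.Adj (x n) (x (n + 1))

/-- The one-sided infinite path (ray) on `ℕ`. -/
def rayGraph : SimpleGraph ℕ := SimpleGraph.fromRel fun m n => n = m + 1


private lemma foldr_max_nonneg (L : List ℝ) : 0 ≤ L.foldr max 0 := by
  induction L with
  | nil => simp
  | cons a t ih => exact le_trans ih (le_max_right _ _)

private lemma le_foldr_max {a : ℝ} {L : List ℝ} (h : a ∈ L) : a ≤ L.foldr max 0 := by
  induction L with
  | nil => simp at h
  | cons b t ih =>
    rcases List.mem_cons.mp h with h | h
    · subst h; exact le_max_left _ _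
    · exact le_trans (ih h) (le_max_right _ _)

private lemma foldr_max_le {L : List ℝ} {c : ℝ} (h0 : 0 ≤ c) (h : ∀ a ∈ L, a ≤ c) :
    L.foldr max 0 ≤ c := by
  induction L with
  | nil => simpa
  | cons b t ih =>
    exact max_le (h b List.mem_cons_self) (ih fun a ha => h a (List.mem_cons_of_mem _ ha))

theorem stmt5 {V : Type} {G : SimpleGraph V} (hT : G.IsTree)
    (l : V → ℝ) (hl : ∀ v, 0 ≤ l v) (d : V → V → ℝ) (hd : PinnedDist G l d) :
    ((∀ x y, d x y = 0 ↔ x = y) ∧ (∀ x y, d x y = d y x) ∧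
        (∀ x y z, d x y ≤ max (d x z) (d z y))) ↔
      (∀ u v : V, G.Adj u v → 0 < max (l u) (l v)) := by
  classical
  obtain ⟨hdiag, hpath⟩ := hd
  have key : ∀ x y : V, x ≠ y → ∀ p : G.Walk x y, p.IsPath → d x y = (p.support.map l).foldr max 0 := hpath
  constructor
  · rintro ⟨h0, -, -⟩ u v huv
    have hne : u ≠ v := huv.ne
    have hp : (SimpleGraph.Walk.cons huv SimpleGraph.Walk.nil : G.Walk u v).IsPath := by
      simp [SimpleGraph.Walk.isPath_def, hne]
    have hduv := key u v hne _ hp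
    simp only [SimpleGraph.Walk.support_cons, SimpleGraph.Walk.support_nil, List.map_cons,
      List.map_nil, List.foldr_cons, List.foldr_nil] at hduv
    have : d u v ≠ 0 := fun h => hne ((h0 u v).mp h)
    have hfold : max (l u) (max (l v) 0) = max (l u) (l v) := by
      rw [max_eq_left (hl v)]
    rw [hfold] at hduv
    rcases lt_or_eq_of_le (le_max_iff.mpr (Or.inl (hl u))) with h | h
    · exact h
    · exact absurd (hduv.trans h.symm) this
  · intro hedge
    -- positivity of d on distinct points
    have hpos : ∀ x y : V, x ≠ y → 0 < d x y := by
      intro x y hxy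
      obtain ⟨w⟩ := hT.isConnected.preconnected x y
      have hdxy := key x y hxy w.toPath.1 w.toPath.2
      cases hq : (w.toPath : G.Walk x y) with
      | nil => exact absurd rfl hxy
      | @cons _ b _ h q =>
        rw [hdxy]
        have hmem : max (l x) (l b) ≤ ((w.toPath : G.Walk x y).support.map l).foldr max 0 := by
          apply max_le
          · exact le_foldr_max (List.mem_map_of_mem (f := l) ((w.toPath : G.Walk x y).start_mem_support))
          · apply le_foldr_max
            apply List.mem_map_of_mem
            rw [hq]
            exact List.mem_cons_of_mem _ q.start_mem_support
        exact lt_of_lt_of_le (hedge _ _ h) hmem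
    have hnn : ∀ x y : V, 0 ≤ d x y := by
      intro x y
      rcases eq_or_ne x y with rfl | h
      · rw [hdiag]
      · exact (hpos x y h).le
    refine ⟨?_, ?_, ?_⟩
    · intro x y
      constructor
      · intro h
        by_contra hne
        exact (hpos x y hne).ne' h
      · rintro rfl; exact hdiag x
    · intro x y
      rcases eq_or_ne x y with rfl | hxy
      · rfl
      · obtain ⟨w⟩ := hT.isConnected.preconnected x y
        have p := w.toPath
        have h1 := key x y hxy p.1 p.2
        have h2 := key y x hxy.symm p.1.reverse (p.2.reverse)
        rw [h1, h2]
        refine le_antisymm ?_ ?_ <;>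
        · apply foldr_max_le (foldr_max_nonneg _)
          intro a ha
          apply le_foldr_max
          simp only [List.mem_map] at ha ⊢
          obtain ⟨v, hv, rfl⟩ := ha
          exact ⟨v, by simpa [SimpleGraph.Walk.support_reverse] using hv, rfl⟩
    · intro x y z
      rcases eq_or_ne x y with rfl | hxy
      · rw [hdiag]
        exact le_max_of_le_left (hnn x z)
      rcases eq_or_ne x z with rfl | hxz
      · rw [hdiag]; simpa using le_max_right (0:ℝ) (d x y)
      rcases eq_or_ne z y with rfl | hzy
      · rw [hdiag]; simpa using le_max_left (d x z) (0:ℝ)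
      obtain ⟨wp⟩ := hT.isConnected.preconnected x z
      obtain ⟨wq⟩ := hT.isConnected.preconnected z y
      set p := wp.toPath with hp
      set q := wq.toPath with hq
      have hdxz := key x z hxz p.1 p.2
      have hdzy := key z y hzy q.1 q.2
      have hw : G.Walk x y := p.1.append q.1
      have hdxy := key x y hxy ((p.1.append q.1).toPath : G.Walk x y)
        (p.1.append q.1).toPath.2
      rw [hdxy, hdxz, hdzy]
      apply foldr_max_le
      · exact le_trans (foldr_max_nonneg _) (le_max_left _ _)
      · intro a ha
        simp only [List.mem_map] at ha
        obtain ⟨v, hv, rfl⟩ := ha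
        have hv2 : v ∈ (p.1.append q.1).support :=
          SimpleGraph.Walk.support_toPath_subset _ hv
        rw [SimpleGraph.Walk.support_append] at hv2
        rcases List.mem_append.mp hv2 with h | h
        · exact le_max_of_le_left (le_foldr_max (List.mem_map_of_mem (f := l) h))
        · exact le_max_of_le_right (le_foldr_max (List.mem_map_of_mem (f := l) (List.mem_of_mem_tail h)))
end

section
/- Let T = T(l) be a labeled tree with non-degenerate labeling l : V(T) → [0,∞). The ultrametric space (V(T), d_l) is complete if and only if for every ray R ⊆ T with vertices x_1, x_2, ... (in ray order) one has limsup_{n→∞} l(x_n) > 0. -/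
open SimpleGraph Filter

namespace Stmt10Aux

/-! ### fold-max helpers -/

def maxL (s : List ℝ) : ℝ := s.foldr max 0

lemma le_maxL {a : ℝ} {s : List ℝ} (h : a ∈ s) : a ≤ maxL s := by
  induction s with
  | nil => simp at h
  | cons b t ih =>
    rcases List.mem_cons.1 h with rfl | h
    · exact le_max_left _ _
    · exact le_trans (ih h) (le_max_right _ _)

lemma maxL_lt {ε : ℝ} {s : List ℝ} (hε : 0 < ε) (h : ∀ a ∈ s, a < ε) : maxL s < ε := by
  induction s with
  | nil => simpa [maxL]
  | cons b t ih =>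
    simp only [maxL, List.foldr_cons] at *
    exact max_lt (h b (by simp)) (ih fun a ha => h a (by simp [ha]))

lemma maxL_perm {s t : List ℝ} (h : s.Perm t) : maxL s = maxL t := by
  induction h with
  | nil => rfl
  | cons a _ ih => simp only [maxL, List.foldr_cons] at *; rw [ih]
  | swap a b t => simp only [maxL, List.foldr_cons]; rw [max_left_comm]
  | trans _ _ ih1 ih2 => exact ih1.trans ih2

/-! ### unique paths in a tree -/

variable {V : Type} {G : SimpleGraph V} (hT : G.IsTree)

noncomputable def pth (u v : V) : G.Walk u v := (hT.existsUnique_path u v).exists.choose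

lemma pth_isPath (u v : V) : (pth hT u v).IsPath := (hT.existsUnique_path u v).exists.choose_spec

lemma pth_eq {u v : V} (p : G.Walk u v) (hp : p.IsPath) : p = pth hT u v :=
  (hT.existsUnique_path u v).unique hp (pth_isPath hT u v)

lemma pth_refl (u : V) : pth hT u u = Walk.nil := (pth_eq hT Walk.nil (by simp)).symm

lemma pth_reverse (u v : V) : (pth hT u v).reverse = pth hT v u :=
  pth_eq hT _ ((pth_isPath hT u v).reverse)

lemma mem_pth_left (u v : V) : u ∈ (pth hT u v).support := Walk.start_mem_support _
lemma mem_pth_right (u v : V) : v ∈ (pth hT u v).support := Walk.end_mem_support _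

lemma mem_pth_symm {u v w : V} (h : w ∈ (pth hT u v).support) : w ∈ (pth hT v u).support := by
  rw [← pth_reverse hT, Walk.support_reverse]; simpa using h

lemma pth_split {u w v : V} (h : v ∈ (pth hT u w).support) :
    pth hT u w = (pth hT u v).append (pth hT v w) := by
  haveI := Classical.decEq V
  have h1 : (pth hT u w).takeUntil v h = pth hT u v :=
    pth_eq hT _ ((pth_isPath hT u w).takeUntil h)
  have h2 : (pth hT u w).dropUntil v h = pth hT v w :=
    pth_eq hT _ ((pth_isPath hT u w).dropUntil h)
  rw [← h1, ← h2, Walk.take_spec]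

noncomputable def len (u v : V) : ℕ := (pth hT u v).length

lemma len_symm (u v : V) : len hT u v = len hT v u := by
  rw [len, len, ← pth_reverse hT, Walk.length_reverse]

lemma len_split {u w v : V} (h : v ∈ (pth hT u w).support) :
    len hT u w = len hT u v + len hT v w := by
  rw [len, pth_split hT h, Walk.length_append]; rfl

lemma eq_of_len_zero {u v : V} (h : len hT u v = 0) : u = v :=
  Walk.eq_of_length_eq_zero h

lemma mem_split_left {u w v a : V} (h : v ∈ (pth hT u w).support)
    (ha : a ∈ (pth hT u v).support) : a ∈ (pth hT u w).support := by
  rw [pth_split hT h, Walk.mem_support_append_iff]; exact Or.inl ha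

lemma mem_split_right {u w v a : V} (h : v ∈ (pth hT u w).support)
    (ha : a ∈ (pth hT v w).support) : a ∈ (pth hT u w).support := by
  rw [pth_split hT h, Walk.mem_support_append_iff]; exact Or.inr ha

lemma tri {u w v a : V} (h : a ∈ (pth hT u w).support) :
    a ∈ (pth hT u v).support ∨ a ∈ (pth hT v w).support := by
  haveI := Classical.decEq V
  have hb : pth hT u w = ((pth hT u v).append (pth hT v w)).bypass :=
    (pth_eq hT _ (Walk.bypass_isPath _)).symm
  have := Walk.support_bypass_subset _ (hb ▸ h)
  rwa [Walk.mem_support_append_iff] at this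

lemma antisym {u v w : V} (h1 : v ∈ (pth hT u w).support)
    (h2 : w ∈ (pth hT u v).support) : v = w := by
  have e1 := len_split hT h1
  have e2 := len_split hT h2
  have := len_symm hT v w
  have hz : len hT v w = 0 := by omega
  exact eq_of_len_zero hT hz

lemma pth_order {u c v w : V} (hv : v ∈ (pth hT u c).support)
    (hw : w ∈ (pth hT u c).support) :
    v ∈ (pth hT u w).support ∨ w ∈ (pth hT u v).support := by
  rcases tri hT (v := w) hv with h | h
  · exact Or.inl h
  · rcases tri hT (v := v) hw with h' | h'
    · exact Or.inr h'
    · have hvw : v = w := antisym hT (mem_pth_symm hT h) (mem_pth_symm hT h')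
      exact Or.inl (hvw ▸ mem_pth_right hT u w)

lemma supp_pth_self {u w v : V} (huw : u = w) (h : v ∈ (pth hT u w).support) : v = u := by
  subst huw
  rw [pth_refl hT] at h
  simpa using h

lemma inter_split {u b w v : V} (hb : b ∈ (pth hT u w).support)
    (h1 : v ∈ (pth hT u b).support) (h2 : v ∈ (pth hT b w).support) : v = b := by
  have hnd : (pth hT u w).support.Nodup := (pth_isPath hT u w).support_nodup
  rw [pth_split hT hb, Walk.support_append, List.nodup_append] at hnd
  by_contra hne
  have hv2 : v ∈ ((pth hT b w).support).tail := by
    have h2' : v ∈ b :: ((pth hT b w).support).tail := by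
      rw [← Walk.support_eq_cons]; exact h2
    rcases List.mem_cons.1 h2' with h | h
    · exact absurd h hne
    · exact h
  exact hnd.2.2 v h1 v hv2 rfl

/-! ### the second vertex of a walk -/

def snd {u v : V} (p : G.Walk u v) : V := p.support.tail.headD v

lemma snd_cons {u w v : V} (h : G.Adj u w) (q : G.Walk w v) :
    snd (Walk.cons h q) = w := by
  rw [snd, Walk.support_cons, List.tail_cons, q.support_eq_cons, List.headD_cons]

lemma snd_adj {u v : V} (p : G.Walk u v) (h : u ≠ v) : G.Adj u (snd p) := by
  cases p with
  | nil => exact absurd rfl h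
  | cons a q => rw [snd_cons]; exact a

lemma snd_mem_tail {u v : V} (p : G.Walk u v) (h : u ≠ v) :
    snd p ∈ p.support.tail := by
  cases p with
  | nil => exact absurd rfl h
  | cons a q =>
    rw [snd_cons, Walk.support_cons, List.tail_cons]
    exact q.start_mem_support

lemma snd_mem {u v : V} (p : G.Walk u v) (h : u ≠ v) : snd p ∈ p.support := by
  rw [p.support_eq_cons]
  exact List.mem_cons_of_mem _ (snd_mem_tail p h)

lemma snd_append {u v w : V} (p : G.Walk u v) (q : G.Walk v w) (h : u ≠ v) :
    snd (p.append q) = snd p := by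
  cases p with
  | nil => exact absurd rfl h
  | cons a r =>
    rw [Walk.cons_append, snd_cons, snd_cons]

lemma snd_agree {b u v : V} (hv : v ∈ (pth hT b u).support) (hvb : v ≠ b) :
    snd (pth hT b u) = snd (pth hT b v) := by
  rw [pth_split hT hv]
  exact snd_append _ _ (Ne.symm hvb)

lemma pth_of_adj {u v : V} (h : G.Adj u v) : pth hT u v = Walk.cons h Walk.nil := by
  refine (pth_eq hT _ ?_).symm
  rw [Walk.cons_isPath_iff]
  exact ⟨Walk.IsPath.nil, by simpa using h.ne⟩

lemma len_of_adj {u v : V} (h : G.Adj u v) : len hT u v = 1 := by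
  rw [len, pth_of_adj hT h]; rfl

lemma adj_of_len_one {u v : V} (h : len hT u v = 1) : G.Adj u v := by
  rw [len] at h
  cases hp : pth hT u v with
  | nil => rw [hp] at h; simp at h
  | @cons _ w _ a q =>
    rw [hp] at h
    have hq : q.length = 0 := by simpa using h
    exact (Walk.eq_of_length_eq_zero hq) ▸ a

lemma dich {b u w : V}
    (hnot : b ∉ (pth hT u w).support) :
    snd (pth hT b u) = snd (pth hT b w) := by
  by_contra hne
  have hdisj : ∀ v, v ∈ (pth hT b u).support → v ∈ (pth hT b w).support → v = b := by
    intro v h1 h2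
    by_contra hv
    exact hne ((snd_agree hT h1 hv).trans (snd_agree hT h2 hv).symm)
  have hW : ((pth hT b u).reverse.append (pth hT b w)).IsPath := by
    rw [Walk.isPath_def, Walk.support_append, Walk.support_reverse, List.nodup_append]
    refine ⟨List.nodup_reverse.2 (pth_isPath hT b u).support_nodup, ?_, ?_⟩
    · have hnd := (pth_isPath hT b w).support_nodup
      rw [(pth hT b w).support_eq_cons] at hnd
      exact hnd.of_cons
    · rintro v hv1 _ hv2 rfl
      have hv1' : v ∈ (pth hT b u).support := List.mem_reverse.1 hv1
      have hbt : b ∉ ((pth hT b w).support).tail := by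
        have hnd := (pth_isPath hT b w).support_nodup
        rw [(pth hT b w).support_eq_cons, List.nodup_cons] at hnd
        exact hnd.1
      have hvb : v ≠ b := fun hvb => hbt (hvb ▸ hv2)
      have : v ∈ (pth hT b w).support := by
        rw [(pth hT b w).support_eq_cons]
        exact List.mem_cons_of_mem _ hv2
      exact hvb (hdisj v hv1' this)
  apply hnot
  have := pth_eq hT _ hW
  rw [← this, Walk.mem_support_append_iff]
  left
  rw [Walk.support_reverse, List.mem_reverse]
  exact mem_pth_left hT b u

/-! ### distance lemmas -/

section Dist
variable {l : V → ℝ} {d : V → V → ℝ}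

lemma d_eq (hd : PinnedDist G l d) {u v : V} (h : u ≠ v) :
    d u v = maxL ((pth hT u v).support.map l) :=
  hd.2 u v h _ (pth_isPath hT u v)

include hT in
lemma d_symm (hd : PinnedDist G l d) (u v : V) : d u v = d v u := by
  by_cases h : u = v
  · subst h; rfl
  · rw [d_eq hT hd h, d_eq hT hd (Ne.symm h)]
    apply maxL_perm
    have hs : (pth hT v u).support = (pth hT u v).support.reverse := by
      rw [← pth_reverse hT u v, Walk.support_reverse]
    rw [hs, List.map_reverse]
    exact (List.reverse_perm _).symm

lemma le_d (hd : PinnedDist G l d) {u v w : V} (h : u ≠ v)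
    (hw : w ∈ (pth hT u v).support) : l w ≤ d u v := by
  rw [d_eq hT hd h]
  exact le_maxL (List.mem_map_of_mem (f := l) hw)

lemma d_lt (hd : PinnedDist G l d) {u v : V} {ε : ℝ} (hε : 0 < ε)
    (hall : ∀ w ∈ (pth hT u v).support, l w < ε) : d u v < ε := by
  by_cases h : u = v
  · subst h; rw [hd.1]; exact hε
  · rw [d_eq hT hd h]
    refine maxL_lt hε ?_
    intro a ha
    obtain ⟨w, hw, rfl⟩ := List.mem_map.1 ha
    exact hall w hw

end Dist

/-! ### walks along a ray -/

section Ray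
variable {x : ℕ → V}

def rayW (hadj : ∀ n, G.Adj (x n) (x (n + 1))) : (m k : ℕ) → G.Walk (x m) (x (m + k))
  | _, 0 => Walk.nil
  | m, k + 1 => (rayW hadj m k).concat (hadj (m + k))

lemma rayW_support (hadj : ∀ n, G.Adj (x n) (x (n + 1))) (m k : ℕ) :
    (rayW hadj m k).support = (List.range (k + 1)).map (fun i => x (m + i)) := by
  induction k with
  | zero => simp [rayW, List.range_succ]
  | succ k ih =>
    rw [rayW, Walk.support_concat, ih]
    rw [List.range_succ (n := k + 1)]
    simp

lemma rayW_isPath (hinj : Function.Injective x) (hadj : ∀ n, G.Adj (x n) (x (n + 1)))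
    (m k : ℕ) : (rayW hadj m k).IsPath := by
  rw [Walk.isPath_def, rayW_support]
  refine List.Nodup.map ?_ List.nodup_range
  intro a b hab
  exact Nat.add_left_cancel (hinj hab)

lemma pth_ray (hx : IsRayIn G x) (m k : ℕ) :
    pth hT (x m) (x (m + k)) = rayW hx.2 m k :=
  (pth_eq hT _ (rayW_isPath hx.1 hx.2 m k)).symm

lemma mem_pth_ray (hx : IsRayIn G x) {m j n : ℕ} (h1 : m ≤ j) (h2 : j ≤ n) :
    x j ∈ (pth hT (x m) (x n)).support := by
  have hk : n = m + (n - m) := by omega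
  rw [hk, pth_ray hT hx, rayW_support]
  refine List.mem_map.2 ⟨j - m, List.mem_range.2 (by omega), ?_⟩
  congr 1
  omega

lemma labels_pth_ray (hx : IsRayIn G x) {m n : ℕ} (h : m ≤ n) {w : V}
    (hw : w ∈ (pth hT (x m) (x n)).support) : ∃ j, m ≤ j ∧ j ≤ n ∧ w = x j := by
  have hk : n = m + (n - m) := by omega
  rw [hk, pth_ray hT hx, rayW_support] at hw
  obtain ⟨i, hi, heq⟩ := List.mem_map.1 hw
  have hi' := List.mem_range.1 hi
  exact ⟨m + i, by omega, by omega, heq.symm⟩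

end Ray

/-! ### persistence -/

def persist (hT : G.IsTree) (x : ℕ → V) (v : V) : Prop :=
  ∃ K : ℕ, ∀ n : ℕ, K ≤ n → v ∈ (pth hT (x 0) (x n)).support

include hT in
theorem forward {l : V → ℝ} (hl : NondegLabeling G l) {d : V → V → ℝ}
    (hd : PinnedDist G l d) (hc : CompleteWith d) :
    ∀ x : ℕ → V, IsRayIn G x → ¬ Filter.Tendsto (fun n => l (x n)) Filter.atTop (nhds 0) := by
  intro x hx htd
  have hsm : ∀ ε : ℝ, 0 < ε → ∃ N, ∀ j, N ≤ j → l (x j) < ε := by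
    intro ε hε
    obtain ⟨N, hN⟩ := (Metric.tendsto_atTop.1 htd) ε hε
    refine ⟨N, fun j hj => ?_⟩
    have := hN j hj
    rwa [Real.dist_eq, sub_zero, abs_of_nonneg (hl.1 _)] at this
  have hcau : CauchyWith d x := by
    intro ε hε
    obtain ⟨N, hN⟩ := hsm ε hε
    refine ⟨N, fun m hm n hn => ?_⟩
    rcases le_total m n with h | h
    · refine d_lt hT hd hε ?_
      intro w hw
      obtain ⟨j, hj1, _, rfl⟩ := labels_pth_ray hT hx h hw
      exact hN j (le_trans hm hj1)
    · rw [d_symm hT hd]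
      refine d_lt hT hd hε ?_
      intro w hw
      obtain ⟨j, hj1, _, rfl⟩ := labels_pth_ray hT hx h hw
      exact hN j (le_trans hn hj1)
  obtain ⟨a, ha⟩ := hc x hcau
  have hfin : {k : ℕ | x k ∈ (pth hT (x 0) a).support}.Finite := by
    have : {k : ℕ | x k ∈ (pth hT (x 0) a).support}
        = x ⁻¹' {v | v ∈ (pth hT (x 0) a).support} := rfl
    rw [this]
    exact Set.Finite.preimage hx.1.injOn (pth hT (x 0) a).support.finite_toSet
  obtain ⟨K, hK⟩ := hfin.bddAbove
  have hout : ∀ k, K + 1 ≤ k → x k ∉ (pth hT (x 0) a).support := by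
    intro k hk hmem
    have : k ≤ K := hK hmem
    omega
  set k0 := K + 1 with hk0
  have hc0 : 0 < max (l (x k0)) (l (x (k0 + 1))) := hl.2 _ _ (hx.2 k0)
  obtain ⟨N2, hN2⟩ := ha _ hc0
  set n := max N2 (k0 + 1) with hn
  have h1 : x k0 ∈ (pth hT (x 0) (x n)).support :=
    mem_pth_ray hT hx (Nat.zero_le _) (by omega)
  have h2 : x (k0 + 1) ∈ (pth hT (x 0) (x n)).support :=
    mem_pth_ray hT hx (Nat.zero_le _) (by omega)
  have h1' : x k0 ∈ (pth hT a (x n)).support := by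
    rcases tri hT (v := a) h1 with h | h
    · exact absurd h (hout k0 le_rfl)
    · exact h
  have h2' : x (k0 + 1) ∈ (pth hT a (x n)).support := by
    rcases tri hT (v := a) h2 with h | h
    · exact absurd h (hout (k0 + 1) (by omega))
    · exact h
  have hax : a ≠ x n := by
    intro he
    have e1 : x k0 = a := supp_pth_self hT he h1'
    have e2 : x (k0 + 1) = a := supp_pth_self hT he h2'
    have := hx.1 (e1.trans e2.symm)
    omega
  have hb1 : l (x k0) ≤ d a (x n) := le_d hT hd hax h1'
  have hb2 : l (x (k0 + 1)) ≤ d a (x n) := le_d hT hd hax h2'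
  have hlt : d (x n) a < max (l (x k0)) (l (x (k0 + 1))) := hN2 n (le_max_left _ _)
  rw [d_symm hT hd] at hlt
  have hmax : max (l (x k0)) (l (x (k0 + 1))) ≤ d a (x n) := max_le hb1 hb2
  linarith

include hT in
theorem backward {l : V → ℝ} (hl : NondegLabeling G l) {d : V → V → ℝ}
    (hd : PinnedDist G l d)
    (H : ∀ x : ℕ → V, IsRayIn G x →
      ¬ Filter.Tendsto (fun n => l (x n)) Filter.atTop (nhds 0)) :
    CompleteWith d := by
  intro x hx
  by_cases hconst : ∃ v, ∀ K, ∃ n, K ≤ n ∧ x n = v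
  · obtain ⟨v, hv⟩ := hconst
    refine ⟨v, fun ε hε => ?_⟩
    obtain ⟨N, hN⟩ := hx ε hε
    obtain ⟨m, hm, hxm⟩ := hv N
    exact ⟨N, fun n hn => hxm ▸ hN n hn m hm⟩
  push_neg at hconst
  have hcomp : ∀ v w, persist hT x v → persist hT x w →
      v ∈ (pth hT (x 0) w).support ∨ w ∈ (pth hT (x 0) v).support := by
    rintro v w ⟨Kv, hKv⟩ ⟨Kw, hKw⟩
    exact pth_order hT (hKv (max Kv Kw) (le_max_left _ _)) (hKw (max Kv Kw) (le_max_right _ _))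
  have hdown : ∀ v w, persist hT x v → w ∈ (pth hT (x 0) v).support → persist hT x w := by
    rintro v w ⟨K, hK⟩ hw
    exact ⟨K, fun n hn => mem_split_left hT (hK n hn) hw⟩
  have hlt : ∀ v w : V, v ∈ (pth hT (x 0) w).support → v ≠ w →
      len hT (x 0) v < len hT (x 0) w := by
    intro v w hvw hne
    have h1 := len_split hT hvw
    have hz : len hT v w ≠ 0 := fun h => hne (eq_of_len_zero hT h)
    omega
  have hPx0 : persist hT x (x 0) := ⟨0, fun n _ => mem_pth_left hT _ _⟩
  by_cases hPfin : {v | persist hT x v}.Finite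
  · -- finitely many persistent vertices: the maximal one is the limit
    have hne0 : hPfin.toFinset.Nonempty := ⟨x 0, hPfin.mem_toFinset.2 hPx0⟩
    obtain ⟨b, hbmem, hbmax⟩ := hPfin.toFinset.exists_max_image (fun v => len hT (x 0) v) hne0
    have hbP : persist hT x b := hPfin.mem_toFinset.1 hbmem
    have hbmax' : ∀ v, persist hT x v → len hT (x 0) v ≤ len hT (x 0) b :=
      fun v hv => hbmax v (hPfin.mem_toFinset.2 hv)
    refine ⟨b, fun ε hε => ?_⟩
    obtain ⟨N₁, hN₁⟩ := hx ε hε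
    obtain ⟨Kb, hKb⟩ := id hbP
    obtain ⟨Kne, hKne⟩ := hconst b
    set M := max N₁ (max Kb Kne) with hM
    have hbQ : ∀ n, M ≤ n → b ∈ (pth hT (x 0) (x n)).support := fun n hn => hKb n (by omega)
    have hxb : ∀ n, M ≤ n → x n ≠ b := fun n hn => hKne n (by omega)
    have S1 : ∀ n, M ≤ n → ∀ v ∈ (pth hT b (x n)).support, v ≠ b → l v < ε := by
      intro n hn v hv hvb
      have hvQ : v ∈ (pth hT (x 0) (x n)).support := mem_split_right hT (hbQ n hn) hv
      have hvnP : ¬ persist hT x v := by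
        intro hvP
        rcases hcomp v b hvP hbP with h | h
        · exact hvb (inter_split hT (hbQ n hn) h hv)
        · exact absurd (hbmax' v hvP) (Nat.not_le.2 (hlt b v h (Ne.symm hvb)))
      rw [persist] at hvnP
      push_neg at hvnP
      obtain ⟨j, hj, hvj⟩ := hvnP M
      have hvmem : v ∈ (pth hT (x j) (x n)).support := by
        rcases tri hT (v := x j) hvQ with h | h
        · exact absurd h hvj
        · exact h
      have hjn : x j ≠ x n := by
        intro he
        exact hvj ((supp_pth_self hT he hvmem) ▸ mem_pth_right hT (x 0) (x j))
      have hb1 := le_d hT hd hjn hvmem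
      have hb2 := hN₁ j (by omega) n (by omega)
      linarith
    have S2 : l b < ε := by
      by_cases hcase : ∃ m, M ≤ m ∧ ∃ n, M ≤ n ∧ x m ≠ x n ∧ b ∈ (pth hT (x m) (x n)).support
      · obtain ⟨m, hm, n, hn, hmn, hbmem2⟩ := hcase
        have hb1 := le_d hT hd hmn hbmem2
        have hb2 := hN₁ m (by omega) n (by omega)
        linarith
      · exfalso
        push_neg at hcase
        have hnotmem : ∀ m n, M ≤ m → M ≤ n → b ∉ (pth hT (x m) (x n)).support := by
          intro m n hm hn hmem
          by_cases hxy : x m = x n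
          · exact hxb m hm (supp_pth_self hT hxy hmem).symm
          · exact hcase m hm n hn hxy hmem
        have hxMb : b ≠ x M := Ne.symm (hxb M le_rfl)
        have hseq : ∀ n, M ≤ n → snd (pth hT b (x n)) = snd (pth hT b (x M)) :=
          fun n hn => dich hT (hnotmem n M hn le_rfl)
        have hsmem : ∀ n, M ≤ n → snd (pth hT b (x M)) ∈ (pth hT b (x n)).support := by
          intro n hn
          rw [← hseq n hn]
          exact snd_mem _ (Ne.symm (hxb n hn))
        have hsP : persist hT x (snd (pth hT b (x M))) :=
          ⟨M, fun n hn => mem_split_right hT (hbQ n hn) (hsmem n hn)⟩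
        have hadj : G.Adj b (snd (pth hT b (x M))) := snd_adj _ hxMb
        have hbs : b ∈ (pth hT (x 0) (snd (pth hT b (x M)))).support := by
          rcases hcomp _ b hsP hbP with h | h
          · exact absurd (inter_split hT (hbQ M le_rfl) h (hsmem M le_rfl)) hadj.ne'
          · exact h
        have hhts : len hT (x 0) (snd (pth hT b (x M))) = len hT (x 0) b + 1 := by
          have h1 := len_split hT hbs
          have h2 : len hT b (snd (pth hT b (x M))) = 1 := len_of_adj hT hadj
          omega
        have := hbmax' _ hsP
        omega
    refine ⟨M, fun n hn => ?_⟩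
    rw [d_symm hT hd]
    refine d_lt hT hd hε ?_
    intro w hw
    by_cases hwb : w = b
    · rw [hwb]; exact S2
    · exact S1 n hn w hw hwb
  · -- infinitely many persistent vertices: build a ray, contradiction
    exfalso
    have hub : ∀ k : ℕ, ∃ v, persist hT x v ∧ k ≤ len hT (x 0) v := by
      intro k
      by_contra hcon
      push_neg at hcon
      apply hPfin
      have hinjOn : Set.InjOn (fun v => len hT (x 0) v) {v | persist hT x v} := by
        intro v hv w hw hvw
        by_contra hne
        rcases hcomp v w hv hw with h | h
        · exact absurd hvw (Nat.ne_of_lt (hlt v w h hne))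
        · exact absurd hvw.symm (Nat.ne_of_lt (hlt w v h (Ne.symm hne)))
      refine Set.Finite.of_finite_image ((Set.finite_Iio k).subset ?_) hinjOn
      rintro _ ⟨v, hv, rfl⟩
      exact hcon v hv
    have hdescend : ∀ j (v : V), persist hT x v → len hT (x 0) v = j →
        ∀ k, k ≤ j → ∃ w, persist hT x w ∧ len hT (x 0) w = k := by
      intro j
      induction j with
      | zero => intro v hv h0 k hk; exact ⟨v, hv, by omega⟩
      | succ j ih =>
        intro v hv hj k hk
        rcases Nat.lt_or_ge k (j + 1) with hcase | hcase
        · have hvx0 : v ≠ x 0 := by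
            intro he
            rw [he] at hj
            rw [len, pth_refl hT] at hj
            simp at hj
          have hadj : G.Adj v (snd (pth hT (x 0) v).reverse) :=
            snd_adj _ hvx0
          have hwmem : snd (pth hT (x 0) v).reverse ∈ (pth hT (x 0) v).support := by
            have hm := snd_mem (pth hT (x 0) v).reverse hvx0
            rwa [Walk.support_reverse, List.mem_reverse] at hm
          have hwP : persist hT x _ := hdown v _ hv hwmem
          have hhw : len hT (x 0) (snd (pth hT (x 0) v).reverse) = j := by
            have h1 := len_split hT hwmem
            have h2 : len hT (snd (pth hT (x 0) v).reverse) v = 1 := len_of_adj hT hadj.symm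
            omega
          exact ih _ hwP hhw k (by omega)
        · have hkj : k = j + 1 := by omega
          exact ⟨v, hv, by omega⟩
    have hex : ∀ k, ∃ v, persist hT x v ∧ len hT (x 0) v = k := by
      intro k
      obtain ⟨v, hv, hk⟩ := hub k
      exact hdescend (len hT (x 0) v) v hv rfl k hk
    choose r hrP hrht using hex
    have hrinj : Function.Injective r := by
      intro a b hab
      have h := congrArg (fun v => len hT (x 0) v) hab
      rw [hrht, hrht] at h
      exact h
    have hradj : ∀ k, G.Adj (r k) (r (k + 1)) := by
      intro k
      have hne : r k ≠ r (k + 1) := by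
        intro h
        have h2 := congrArg (fun v => len hT (x 0) v) h
        rw [hrht, hrht] at h2
        omega
      rcases hcomp _ _ (hrP k) (hrP (k + 1)) with h | h
      · have h1 := len_split hT h
        rw [hrht, hrht] at h1
        exact adj_of_len_one hT (by omega)
      · have := hlt _ _ h (Ne.symm hne)
        rw [hrht, hrht] at this
        omega
    have htend : Filter.Tendsto (fun n => l (r n)) Filter.atTop (nhds 0) := by
      rw [Metric.tendsto_atTop]
      intro ε hε
      obtain ⟨N, hN⟩ := hx ε hε
      refine ⟨(pth hT (x 0) (x N)).length + 1, fun k hk => ?_⟩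
      have hnotQ : r k ∉ (pth hT (x 0) (x N)).support := by
        intro hmem
        have h1 := len_split hT hmem
        have h2 := hrht k
        have h3 : len hT (x 0) (x N) = (pth hT (x 0) (x N)).length := rfl
        omega
      obtain ⟨Kk, hKk⟩ := hrP k
      set n := max N Kk with hn
      have hrkQ : r k ∈ (pth hT (x 0) (x n)).support := hKk n (le_max_right _ _)
      have hmem2 : r k ∈ (pth hT (x N) (x n)).support := by
        rcases tri hT (v := x N) hrkQ with h | h
        · exact absurd h hnotQ
        · exact h
      have hNn : x N ≠ x n := by
        intro he
        exact hnotQ ((supp_pth_self hT he hmem2) ▸ mem_pth_right hT (x 0) (x N))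
      have hle : l (r k) ≤ d (x N) (x n) := le_d hT hd hNn hmem2
      have hlt2 : d (x N) (x n) < ε := hN N le_rfl n (le_max_left _ _)
      rw [Real.dist_eq, sub_zero, abs_of_nonneg (hl.1 _)]
      linarith
    exact H r ⟨hrinj, hradj⟩ htend

end Stmt10Aux


theorem stmt10 {V : Type} {G : SimpleGraph V} (hT : G.IsTree)
    (l : V → ℝ) (hl : NondegLabeling G l) (d : V → V → ℝ) (hd : PinnedDist G l d) :
    CompleteWith d ↔
      ∀ x : ℕ → V, IsRayIn G x →
        ¬ Filter.Tendsto (fun n => l (x n)) Filter.atTop (nhds 0) :=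
  ⟨fun hc => Stmt10Aux.forward hT hl hd hc, fun H => Stmt10Aux.backward hT hl hd H⟩
end

section
/- A tree T is rayless (contains no ray as a subgraph) if and only if for every non-degenerate labeling l : V(T) → [0,∞) the ultrametric space (V(T), d_l) is complete. -/
open SimpleGraph Filter

set_option linter.unusedSectionVars false

namespace Stmt11Aux

variable {V : Type} {G : SimpleGraph V}

lemma maxl_nonneg (f : V → ℝ) (hf : ∀ v, 0 ≤ f v) : ∀ s : List V, 0 ≤ (s.map f).foldr max 0
  | [] => le_refl 0
  | a :: s => le_trans (maxl_nonneg f hf s) (by simp [le_max_iff])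

lemma le_maxl {f : V → ℝ} : ∀ {s : List V} {a : V}, a ∈ s → f a ≤ (s.map f).foldr max 0
  | b :: s, a, h => by
    rcases List.mem_cons.1 h with rfl | h
    · simp [le_max_iff]
    · simpa [le_max_iff] using Or.inr (le_maxl h)

lemma maxl_le {f : V → ℝ} {c : ℝ} (h0 : 0 ≤ c) :
    ∀ {s : List V}, (∀ a ∈ s, f a ≤ c) → (s.map f).foldr max 0 ≤ c
  | [], _ => h0
  | a :: s, h => by
    simp only [List.map_cons, List.foldr_cons, max_le_iff]
    exact ⟨h a (by simp), maxl_le h0 fun b hb => h b (by simp [hb])⟩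

lemma isPath_append {u v w : V} {p : G.Walk u v} {q : G.Walk v w}
    (hp : p.IsPath) (hq : q.IsPath) (hdisj : ∀ c, c ∈ p.support → c ∈ q.support → c = v) :
    (p.append q).IsPath := by
  rw [Walk.isPath_def, Walk.support_append, List.nodup_append]
  refine ⟨hp.support_nodup, hq.support_nodup.tail, fun c hc b hc' hcb => ?_⟩
  subst hcb
  have hcq : c ∈ q.support := List.mem_of_mem_tail hc'
  have hcv : c = v := hdisj c hc hcq
  subst hcv
  have := hq.support_nodup
  rw [q.support_eq_cons] at this
  exact (List.nodup_cons.1 this).1 hc'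

lemma getVert_one_takeUntil [DecidableEq V] {u v c : V} (p : G.Walk u v)
    (hc : c ∈ p.support) (hcu : c ≠ u) :
    (p.takeUntil c hc).getVert 1 = p.getVert 1 := by
  have hnn : ¬ (p.takeUntil c hc).Nil := Walk.not_nil_of_ne (Ne.symm hcu)
  obtain ⟨a, ha, q, hq⟩ := Walk.not_nil_iff.1 hnn
  have hspec := p.take_spec hc
  rw [hq] at hspec ⊢
  rw [← hspec, Walk.cons_append, Walk.getVert_cons _ _ one_ne_zero, Walk.getVert_cons _ _ one_ne_zero,
    Nat.sub_self, Walk.getVert_zero, Walk.getVert_zero]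

/-- Dependent-choice style chain construction. -/
lemma exists_chain {α : Type*} (Good : α → Prop) (R : α → α → Prop) (a0 : α) (h0 : Good a0)
    (hstep : ∀ a, Good a → ∃ b, Good b ∧ R a b) :
    ∃ f : ℕ → α, f 0 = a0 ∧ (∀ n, Good (f n)) ∧ ∀ n, R (f n) (f (n + 1)) := by
  choose F hF1 hF2 using hstep
  let f : ℕ → {a // Good a} := fun n =>
    Nat.rec ⟨a0, h0⟩ (fun _ p => ⟨F p.1 p.2, hF1 p.1 p.2⟩) n
  exact ⟨fun n => (f n).1, rfl, fun n => (f n).2, fun n => hF2 (f n).1 (f n).2⟩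

/-- Walks along a ray. -/
def raySeg (x : ℕ → V) (hadj : ∀ n, G.Adj (x n) (x (n + 1))) (m : ℕ) :
    (k : ℕ) → G.Walk (x m) (x (m + k))
  | 0 => Walk.nil
  | k + 1 => (raySeg x hadj m k).concat (hadj (m + k))

lemma raySeg_support (x : ℕ → V) (hadj : ∀ n, G.Adj (x n) (x (n + 1))) (m : ℕ) :
    ∀ k, (raySeg (G := G) x hadj m k).support = (List.range (k + 1)).map (fun i => x (m + i))
  | 0 => by simp [raySeg, List.range_succ]
  | k + 1 => by
    rw [raySeg, Walk.support_concat, raySeg_support x hadj m k]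
    simp [List.range_succ]

lemma raySeg_isPath (x : ℕ → V) (hinj : Function.Injective x)
    (hadj : ∀ n, G.Adj (x n) (x (n + 1))) (m k : ℕ) :
    (raySeg (G := G) x hadj m k).IsPath := by
  rw [Walk.isPath_def, raySeg_support]
  refine List.Nodup.map ?_ List.nodup_range
  intro a b hab
  have := hinj hab
  omega

section DLemmas

variable (hT : G.IsTree) {l : V → ℝ} {d : V → V → ℝ}
  (hl : NondegLabeling G l) (hd : PinnedDist G l d)

include hT hl hd

lemma path_unique {u v : V} (p q : G.Walk u v) (hp : p.IsPath) (hq : q.IsPath) : p = q := by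
  obtain ⟨r, -, hr⟩ := hT.existsUnique_path u v
  rw [hr p hp, hr q hq]

lemma d_nonneg (u v : V) : 0 ≤ d u v := by
  rcases eq_or_ne u v with rfl | huv
  · rw [hd.1]
  · obtain ⟨p, hp, -⟩ := hT.existsUnique_path u v
    rw [hd.2 u v huv p hp]
    exact maxl_nonneg l hl.1 _

lemma le_d {u v a : V} (huv : u ≠ v) (p : G.Walk u v) (hp : p.IsPath)
    (ha : a ∈ p.support) : l a ≤ d u v := by
  rw [hd.2 u v huv p hp]; exact le_maxl ha

lemma d_le {u v : V} (w : G.Walk u v) {c : ℝ} (h0 : 0 ≤ c)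
    (hw : ∀ a ∈ w.support, l a ≤ c) : d u v ≤ c := by
  classical
  rcases eq_or_ne u v with rfl | huv
  · rw [hd.1]; exact h0
  · rw [hd.2 u v huv w.bypass w.bypass_isPath]
    exact maxl_le h0 fun a ha => hw a (w.support_bypass_subset ha)

lemma d_ultra (u v w : V) : d u v ≤ max (d u w) (d w v) := by
  have h0 : (0:ℝ) ≤ max (d u w) (d w v) :=
    le_trans (d_nonneg hT hl hd u w) (le_max_left _ _)
  rcases eq_or_ne u w with rfl | huw
  · exact le_trans (le_refl _) (le_max_right _ _)
  rcases eq_or_ne w v with rfl | hwv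
  · exact le_max_left _ _
  obtain ⟨p, hp, -⟩ := hT.existsUnique_path u w
  obtain ⟨q, hq, -⟩ := hT.existsUnique_path w v
  refine d_le hT hl hd (p.append q) h0 fun a ha => ?_
  rcases (Walk.mem_support_append_iff p q).1 ha with h | h
  · exact le_trans (le_d hT hl hd huw p hp h) (le_max_left _ _)
  · exact le_trans (le_d hT hl hd hwv q hq h) (le_max_right _ _)

lemma complete_of_no_ray (hnoray : ¬ ∃ x : ℕ → V, IsRayIn G x) : CompleteWith d := by
  classical
  intro x hx
  by_contra hna
  push_neg at hna
  have key : ∀ a : V, ∃ ε, 0 < ε ∧ ∃ N, ∀ n, N ≤ n → ε ≤ d (x n) a := by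
    intro a
    have h1 : ¬ TendstoWith d x a := hna a
    unfold TendstoWith at h1
    push_neg at h1
    obtain ⟨ε, hε, hinf⟩ := h1
    obtain ⟨N, hN⟩ := hx ε hε
    obtain ⟨n0, hn0, hd0⟩ := hinf N
    refine ⟨ε, hε, N, fun n hn => ?_⟩
    by_contra hlt
    push_neg at hlt
    have h2 : d (x n0) a ≤ max (d (x n0) (x n)) (d (x n) a) := d_ultra hT hl hd _ _ _
    have h3 : d (x n0) (x n) < ε := hN n0 hn0 n hn
    have h4 := max_lt h3 hlt
    linarith
  have hEU := fun n => hT.existsUnique_path (x 0) (x n)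
  choose P hP hPu using hEU
  -- the step of the ray construction
  have hstep : ∀ s : Σ u : V, G.Walk (x 0) u,
      (s.2.IsPath ∧ ∃ N, ∀ n, N ≤ n → ∃ r : G.Walk s.1 (x n), P n = s.2.append r) →
      ∃ t : Σ u : V, G.Walk (x 0) u,
        ((t.2.IsPath ∧ ∃ N, ∀ n, N ≤ n → ∃ r : G.Walk t.1 (x n), P n = t.2.append r) ∧
          ∃ h : G.Adj s.1 t.1, t.2 = s.2.concat h) := by
    rintro ⟨u, w⟩ ⟨hw, N, hN⟩
    obtain ⟨ε, hε, N1, hK⟩ := key u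
    obtain ⟨N2, hC⟩ := hx ε hε
    set M := max N (max N1 N2) with hM
    have hMN : N ≤ M := le_max_left _ _
    have hMN1 : N1 ≤ M := le_trans (le_max_left _ _) (le_max_right _ _)
    have hMN2 : N2 ≤ M := le_trans (le_max_right _ _) (le_max_right _ _)
    have hne : ∀ n, M ≤ n → x n ≠ u := by
      intro n hn hx_eq
      have h5 := hK n (le_trans hMN1 hn)
      rw [hx_eq, hd.1] at h5
      linarith
    have hr : ∀ n, M ≤ n → ∀ r : G.Walk u (x n), P n = w.append r → r.IsPath := by
      intro n hn r hrn
      have h5 := hP n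
      rw [hrn] at h5
      exact h5.of_append_right
    have hsnd : ∀ m, M ≤ m → ∀ n, M ≤ n → ∀ (r1 : G.Walk u (x m)) (r2 : G.Walk u (x n)),
        r1.IsPath → r2.IsPath → r1.getVert 1 = r2.getVert 1 := by
      intro m hm n hn r1 r2 h1 h2
      by_cases hmn : x m = x n
      · have hcopy : (r1.copy rfl hmn).IsPath := by rwa [Walk.isPath_copy]
        have h5 : r1.copy rfl hmn = r2 := path_unique hT hl hd _ _ hcopy h2
        rw [← h5, Walk.getVert_copy]
      · by_contra hne2
        have honly : ∀ c, c ∈ r1.support → c ∈ r2.support → c = u := by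
          intro c hc1 hc2
          by_contra hcu
          have ht : r1.takeUntil c hc1 = r2.takeUntil c hc2 :=
            path_unique hT hl hd _ _ (h1.takeUntil hc1) (h2.takeUntil hc2)
          have e1 := getVert_one_takeUntil r1 hc1 hcu
          have e2 := getVert_one_takeUntil r2 hc2 hcu
          rw [ht] at e1
          exact hne2 (e1.symm.trans e2)
        have hWp : (r1.reverse.append r2).IsPath := by
          refine isPath_append h1.reverse h2 fun c hc1 hc2 => ?_
          exact honly c (by simpa [Walk.support_reverse] using hc1) hc2
        have hub : d (x m) u ≤ d (x m) (x n) := by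
          refine d_le hT hl hd r1.reverse (d_nonneg hT hl hd _ _) fun a ha => ?_
          refine le_d hT hl hd hmn _ hWp ?_
          exact Walk.subset_support_append_left _ _ ha
        have h5 := hK m (le_trans hMN1 hm)
        have h6 := hC m (le_trans hMN2 hm) n (le_trans hMN2 hn)
        linarith
    obtain ⟨rM, hrM⟩ := hN M hMN
    have hrMp : rM.IsPath := hr M le_rfl rM hrM
    have hrMnn : ¬ rM.Nil := Walk.not_nil_of_ne (Ne.symm (hne M le_rfl))
    obtain ⟨u', hadj, rM', hrM'⟩ := Walk.not_nil_iff.1 hrMnn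
    refine ⟨⟨u', w.concat hadj⟩, ⟨?_, M, ?_⟩, hadj, rfl⟩
    · have h5 : P M = (w.concat hadj).append rM' := by
        rw [hrM, hrM', Walk.concat_append]
      have h7 := hP M
      rw [h5] at h7
      exact h7.of_append_left
    · intro n hn
      obtain ⟨rn, hrn⟩ := hN n (le_trans hMN hn)
      have hrnp := hr n hn rn hrn
      have hrnnn : ¬ rn.Nil := Walk.not_nil_of_ne (Ne.symm (hne n hn))
      obtain ⟨v', hadj2, rn', hrn'⟩ := Walk.not_nil_iff.1 hrnnn
      have hv' : v' = u' := by
        have h5 := hsnd n hn M le_rfl rn rM hrnp hrMp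
        rw [hrn', hrM'] at h5
        simpa [Walk.getVert_cons] using h5
      subst hv'
      exact ⟨rn', by rw [hrn, hrn', Walk.concat_append]⟩
  obtain ⟨f, hf0, hfG, hfR⟩ := exists_chain
    (fun s : Σ u : V, G.Walk (x 0) u =>
      s.2.IsPath ∧ ∃ N, ∀ n, N ≤ n → ∃ r : G.Walk s.1 (x n), P n = s.2.append r)
    (fun s t => ∃ h : G.Adj s.1 t.1, t.2 = s.2.concat h)
    ⟨x 0, Walk.nil⟩ ⟨Walk.IsPath.nil, 0, fun n _ => ⟨P n, (Walk.nil_append _).symm⟩⟩ hstep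
  have hmem : ∀ j k, j ≤ k → (f j).1 ∈ (f k).2.support := by
    intro j k
    induction k with
    | zero =>
      intro h
      have : j = 0 := Nat.le_zero.1 h
      subst this
      exact Walk.end_mem_support _
    | succ k ih =>
      intro h
      rcases eq_or_lt_of_le h with rfl | hlt
      · exact Walk.end_mem_support _
      · obtain ⟨hedge, hconcat⟩ := hfR k
        rw [hconcat, Walk.support_concat, List.mem_append]
        exact Or.inl (ih (Nat.lt_succ_iff.1 hlt))
  have hlt : ∀ j k, j < k → (f j).1 ≠ (f k).1 := by
    intro j k hjk
    obtain ⟨k, rfl⟩ : ∃ k', k = k' + 1 := ⟨k - 1, by omega⟩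
    obtain ⟨hedge, hconcat⟩ := hfR k
    have h8 := (hfG (k + 1)).1.support_nodup
    rw [hconcat, Walk.support_concat, List.nodup_append] at h8
    have h9 : (f (k + 1)).1 ∉ (f k).2.support := fun hmem' => h8.2.2 _ hmem' _ (by simp) rfl
    intro hEq
    exact h9 (hEq ▸ hmem j k (by omega))
  have hinj : Function.Injective (fun k => (f k).1) := by
    intro a b hab
    rcases lt_trichotomy a b with h | h | h
    · exact absurd hab (hlt a b h)
    · exact h
    · exact absurd hab.symm (hlt b a h)
  exact hnoray ⟨fun k => (f k).1, hinj, fun k => (hfR k).choose⟩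

end DLemmas

end Stmt11Aux

theorem stmt11 {V : Type} {G : SimpleGraph V} (hT : G.IsTree) :
    (¬ ∃ x : ℕ → V, IsRayIn G x) ↔
      ∀ l : V → ℝ, NondegLabeling G l →
        ∀ d : V → V → ℝ, PinnedDist G l d → CompleteWith d := by
  constructor
  · intro hnoray l hl d hd
    exact Stmt11Aux.complete_of_no_ray hT hl hd hnoray
  · intro hAll hray
    obtain ⟨x, hinj, hadj⟩ := hray
    classical
    set l : V → ℝ := fun v => if h : ∃ n, v = x n then (1/2 : ℝ) ^ (h.choose) else 1 with hldef
    have hlx : ∀ n, l (x n) = (1/2 : ℝ) ^ n := by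
      intro n
      have h : ∃ m, x n = x m := ⟨n, rfl⟩
      have hch : h.choose = n := hinj h.choose_spec.symm
      simp only [hldef]
      rw [dif_pos h, hch]
    have hlpos : ∀ v, 0 < l v := by
      intro v
      simp only [hldef]
      split
      · positivity
      · norm_num
    have hnd : NondegLabeling G l := ⟨fun v => (hlpos v).le,
      fun u v _ => lt_of_lt_of_le (hlpos u) (le_max_left _ _)⟩
    set d : V → V → ℝ := fun u v =>
      if h : u = v then 0
      else ((((hT.existsUnique_path u v).exists.choose).support.map l).foldr max 0) with hddef
    have hpin : PinnedDist G l d := by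
      constructor
      · intro u; simp [hddef]
      · intro u v huv p hp
        simp only [hddef]
        rw [dif_neg huv]
        have hpe : p = (hT.existsUnique_path u v).exists.choose :=
          (hT.existsUnique_path u v).unique hp ((hT.existsUnique_path u v).exists.choose_spec)
        rw [← hpe]
    have hseg : ∀ m n, m ≤ n → ∃ p : G.Walk (x m) (x n), p.IsPath ∧
        ∀ a ∈ p.support, ∃ i, m ≤ i ∧ i ≤ n ∧ a = x i := by
      intro m n h
      refine ⟨(Stmt11Aux.raySeg x hadj m (n - m)).copy rfl (congrArg x (by omega)), ?_, ?_⟩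
      · rw [Walk.isPath_copy]; exact Stmt11Aux.raySeg_isPath x hinj hadj m (n - m)
      · intro a ha
        rw [Walk.support_copy, Stmt11Aux.raySeg_support] at ha
        obtain ⟨i, hi, rfl⟩ := List.mem_map.1 ha
        have := List.mem_range.1 hi
        exact ⟨m + i, by omega, by omega, rfl⟩
    have hCauchy : CauchyWith d x := by
      intro ε hε
      obtain ⟨N, hN⟩ := exists_pow_lt_of_lt_one hε (by norm_num : (1/2 : ℝ) < 1)
      refine ⟨N, fun m hm n hn => ?_⟩
      rcases eq_or_ne m n with rfl | hmn
      · simpa [hddef] using hε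
      · have hxmn : x m ≠ x n := fun h => hmn (hinj h)
        obtain ⟨p, hp, hsup⟩ : ∃ p : G.Walk (x m) (x n), p.IsPath ∧
            ∀ a ∈ p.support, ∃ i, N ≤ i ∧ a = x i := by
          rcases Nat.lt_or_ge m n with h | h
          · obtain ⟨p, hp, hs⟩ := hseg m n h.le
            exact ⟨p, hp, fun a ha => by
              obtain ⟨i, h1, h2, h3⟩ := hs a ha; exact ⟨i, by omega, h3⟩⟩
          · obtain ⟨p, hp, hs⟩ := hseg n m h
            refine ⟨p.reverse, hp.reverse, fun a ha => ?_⟩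
            obtain ⟨i, h1, h2, h3⟩ := hs a (by simpa [Walk.support_reverse] using ha)
            exact ⟨i, by omega, h3⟩
        rw [hpin.2 (x m) (x n) hxmn p hp]
        refine lt_of_le_of_lt (Stmt11Aux.maxl_le (by positivity) fun a ha => ?_) hN
        obtain ⟨i, hi, rfl⟩ := hsup a ha
        rw [hlx i]
        exact pow_le_pow_of_le_one (by norm_num) (by norm_num) hi
    obtain ⟨a, ha⟩ := hAll l hnd d hpin x hCauchy
    obtain ⟨N, hN⟩ := ha (l a) (hlpos a)
    have hpick : ∃ n, N ≤ n ∧ x n ≠ a := by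
      by_cases hexa : ∃ k, x k = a
      · obtain ⟨k, hk⟩ := hexa
        refine ⟨max N (k + 1), le_max_left _ _, fun h => ?_⟩
        have h2 : max N (k + 1) = k := hinj (h.trans hk.symm)
        have h3 := le_max_right N (k + 1)
        omega
      · exact ⟨N, le_rfl, fun h => hexa ⟨N, h⟩⟩
    obtain ⟨n, hn, hna⟩ := hpick
    have h1 := hN n hn
    obtain ⟨p, hp, -⟩ := hT.existsUnique_path (x n) a
    have h2 : l a ≤ d (x n) a := by
      rw [hpin.2 _ _ hna p hp]
      exact Stmt11Aux.le_maxl (Walk.end_mem_support p)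
    linarith
end

section
/- Let T = T(l) be a labeled tree with non-degenerate labeling. The ultrametric space (V(T), d_l) is discrete (every point isolated) if and only if for every vertex v with l(v) = 0 one has inf{l(u) : u adjacent to v} > 0. -/
open SimpleGraph Filter

private lemma mem_le_foldr_max {L : List ℝ} {a : ℝ} (h : a ∈ L) : a ≤ L.foldr max 0 := by
  induction L with
  | nil => simp at h
  | cons b t ih =>
    rcases List.mem_cons.mp h with h | h
    · subst h; exact le_max_left _ _
    · exact (ih h).trans (le_max_right _ _)

theorem stmt12 {V : Type} {G : SimpleGraph V} (hT : G.IsTree)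
    (l : V → ℝ) (hl : NondegLabeling G l) (d : V → V → ℝ) (hd : PinnedDist G l d) :
    DiscreteWith d ↔
      ∀ v : V, l v = 0 → ∃ ε : ℝ, 0 < ε ∧ ∀ u : V, G.Adj v u → ε ≤ l u := by
  classical
  obtain ⟨hdiag, hpath⟩ := hd
  obtain ⟨hl0, _⟩ := hl
  constructor
  · rintro hdisc v hv
    obtain ⟨ε, hε, hεle⟩ := hdisc v
    refine ⟨ε, hε, fun u hadj => ?_⟩
    have hne : v ≠ u := hadj.ne
    have hp : (SimpleGraph.Walk.cons hadj SimpleGraph.Walk.nil : G.Walk v u).IsPath := by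
      simp [SimpleGraph.Walk.isPath_def, hne]
    have := hpath v u hne _ hp
    have hd2 : d v u = l u := by
      rw [this]; simp [SimpleGraph.Walk.support, hv, max_eq_left (hl0 u)]
      exact hl0 u
    have := hεle u (Ne.symm hne)
    linarith
  · rintro hcond p
    rcases eq_or_lt_of_le (hl0 p) with hlp | hlp
    · obtain ⟨ε, hε, hεle⟩ := hcond p hlp.symm
      refine ⟨ε, hε, fun x hx => ?_⟩
      obtain ⟨w⟩ := hT.isConnected p x
      have hne : p ≠ x := Ne.symm hx
      obtain ⟨w, hw⟩ : ∃ w : G.Walk p x, w.IsPath := ⟨w.toPath.1, w.toPath.2⟩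
      cases w with
      | nil => exact absurd rfl hne
      | cons hadj q =>
        rename_i b
        have hεb : ε ≤ l b := hεle b hadj
        have hbmem : l b ∈ ((SimpleGraph.Walk.cons hadj q).support.map l) :=
          List.mem_map_of_mem (f := l) (by simp [SimpleGraph.Walk.support_cons])
        calc ε ≤ l b := hεb
          _ ≤ _ := mem_le_foldr_max hbmem
          _ = d p x := (hpath p x hne _ hw).symm
    · refine ⟨l p, hlp, fun x hx => ?_⟩
      obtain ⟨w⟩ := hT.isConnected p x
      have hne : p ≠ x := Ne.symm hx
      obtain ⟨w, hw⟩ : ∃ w : G.Walk p x, w.IsPath := ⟨w.toPath.1, w.toPath.2⟩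
      have hmem : l p ∈ (w.support.map l) :=
        List.mem_map_of_mem (f := l) w.start_mem_support
      calc l p ≤ _ := mem_le_foldr_max hmem
        _ = d p x := (hpath p x hne _ hw).symm
end

section
/- Let T be a tree and l : V(T) → [0,∞) a non-degenerate labeling. Then the set of isolated points of the ultrametric space (V(T), d_l) is dense in (V(T), d_l). -/
open SimpleGraph Filter

lemma foldr_max_ge' {a : ℝ} : ∀ {L : List ℝ}, a ∈ L → a ≤ L.foldr max 0
  | b :: L, h => by
    rcases List.mem_cons.mp h with rfl | h
    · exact le_max_left _ _
    · exact le_trans (foldr_max_ge' h) (le_max_right _ _)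

theorem stmt14 {V : Type} {G : SimpleGraph V} (hT : G.IsTree)
    (l : V → ℝ) (hl : NondegLabeling G l) (d : V → V → ℝ) (hd : PinnedDist G l d) :
    ∀ v : V, ∀ ε : ℝ, 0 < ε → ∃ s : V,
      (∃ δ : ℝ, 0 < δ ∧ ∀ x : V, x ≠ s → δ ≤ d s x) ∧ d v s < ε := by
  classical
  obtain ⟨hl0, hl1⟩ := hl
  obtain ⟨hd0, hd1⟩ := hd
  have key : ∀ s x : V, s ≠ x → l s ≤ d s x := by
    intro s x hne
    obtain ⟨w⟩ := hT.isConnected.preconnected s x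
    rw [hd1 s x hne w.bypass w.bypass_isPath]
    exact foldr_max_ge' (List.mem_map_of_mem (f := l) w.bypass.start_mem_support)
  intro v ε hε
  rcases lt_or_eq_of_le (hl0 v) with hv | hv
  · refine ⟨v, ⟨l v, hv, fun x hx => key v x hx.symm⟩, ?_⟩
    rw [hd0 v]; exact hε
  · by_cases hnb : ∃ u, G.Adj v u ∧ l u < ε
    · obtain ⟨u, hadj, hu⟩ := hnb
      have hlu : 0 < l u := by
        have := hl1 v u hadj
        rwa [← hv, max_eq_right (hl0 u)] at this
      refine ⟨u, ⟨l u, hlu, fun x hx => key u x hx.symm⟩, ?_⟩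
      have hpath : (SimpleGraph.Walk.cons hadj SimpleGraph.Walk.nil).IsPath := by
        simp [hadj.ne]
      rw [hd1 v u hadj.ne _ hpath]
      simp only [SimpleGraph.Walk.support_cons, SimpleGraph.Walk.support_nil,
        List.map_cons, List.map_nil, List.foldr_cons, List.foldr_nil]
      rw [← hv, max_eq_right, max_eq_left (hl0 u)]
      · exact hu
      · exact le_max_of_le_left (hl0 u)
    · push_neg at hnb
      refine ⟨v, ⟨ε, hε, fun x hx => ?_⟩, by rw [hd0 v]; exact hε⟩
      have hne : v ≠ x := hx.symm
      have aux : ∀ p : G.Walk v x, ε ≤ (p.support.map l).foldr max 0 := by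
        intro p
        cases p with
        | nil => exact absurd rfl hne
        | cons h q =>
          refine le_trans (hnb _ h) (foldr_max_ge' ?_)
          exact List.mem_map_of_mem (f := l) (by
            rw [SimpleGraph.Walk.support_cons]
            exact List.mem_cons_of_mem _ q.start_mem_support)
      obtain ⟨w⟩ := hT.isConnected.preconnected v x
      rw [hd1 v x hne w.bypass w.bypass_isPath]
      exact aux w.bypass
end

section
/- Let T = T(l) be a labeled tree with non-degenerate labeling. The ultrametric space (V(T), d_l) is totally bounded if and only if the set V_ε = {v ∈ V(T) : l(v) ≥ ε} is finite for every ε > 0 and every vertex v with l(v) > 0 has finite degree. -/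
open SimpleGraph Filter

namespace Stmt15Aux

def m (L : List ℝ) : ℝ := L.foldr max 0

lemma m_nonneg (L : List ℝ) : 0 ≤ m L := by
  induction L with
  | nil => simp [m]
  | cons a L ih => exact le_trans ih (le_max_right _ _)

lemma le_m {a : ℝ} {L : List ℝ} (h : a ∈ L) : a ≤ m L := by
  induction L with
  | nil => simp at h
  | cons b L ih =>
    rcases List.mem_cons.mp h with h | h
    · subst h; exact le_max_left _ _
    · exact le_trans (ih h) (le_max_right _ _)

lemma m_le {b : ℝ} {L : List ℝ} (hb : 0 ≤ b) (h : ∀ a ∈ L, a ≤ b) : m L ≤ b := by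
  induction L with
  | nil => simpa [m] using hb
  | cons a L ih =>
    exact max_le (h a (List.mem_cons_self)) (ih fun x hx => h x (List.mem_cons_of_mem _ hx))

lemma m_lt {b : ℝ} {L : List ℝ} (hb : 0 < b) (h : ∀ a ∈ L, a < b) : m L < b := by
  induction L with
  | nil => simpa [m] using hb
  | cons a L ih =>
    exact max_lt (h a (List.mem_cons_self)) (ih fun x hx => h x (List.mem_cons_of_mem _ hx))

lemma m_subset {L M : List ℝ} (h : L ⊆ M) : m L ≤ m M :=
  m_le (m_nonneg M) fun a ha => le_m (h ha)

variable {V : Type} [DecidableEq V] {G : SimpleGraph V} {l : V → ℝ} {d : V → V → ℝ}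

lemma exists_path (hT : G.IsTree) (u v : V) : ∃ p : G.Walk u v, p.IsPath := by
  obtain ⟨w⟩ := hT.isConnected.preconnected u v
  exact ⟨w.bypass, w.bypass_isPath⟩

lemma d_le_walk (hd : PinnedDist G l d) (u v : V) (w : G.Walk u v) :
    d u v ≤ m (w.support.map l) := by
  by_cases h : u = v
  · subst h; rw [hd.1]; exact m_nonneg _
  · rw [hd.2 u v h w.bypass w.bypass_isPath]
    refine m_le (m_nonneg _) fun a ha => ?_
    obtain ⟨x, hx, rfl⟩ := List.mem_map.mp ha
    exact le_m (List.mem_map_of_mem (f := l) (w.support_bypass_subset hx))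

lemma d_symm (hT : G.IsTree) (hd : PinnedDist G l d) (u v : V) : d u v = d v u := by
  by_cases h : u = v
  · subst h; rfl
  · obtain ⟨p, hp⟩ := exists_path hT u v
    rw [hd.2 u v h p hp, hd.2 v u (Ne.symm h) p.reverse hp.reverse]
    show m _ = m _
    have h1 : p.reverse.support.map l ⊆ p.support.map l := by
      intro a ha
      simp only [Walk.support_reverse, List.map_reverse, List.mem_reverse] at ha
      exact ha
    have h2 : p.support.map l ⊆ p.reverse.support.map l := by
      intro a ha
      simp only [Walk.support_reverse, List.map_reverse, List.mem_reverse]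
      exact ha
    exact le_antisymm (m_subset h2) (m_subset h1)

lemma d_ultra (hT : G.IsTree) (hd : PinnedDist G l d) (u v c : V) :
    d u v ≤ max (d u c) (d c v) := by
  by_cases huc : u = c
  · subst huc; exact le_max_right _ _
  by_cases hcv : c = v
  · subst hcv; exact le_max_left _ _
  obtain ⟨p, hp⟩ := exists_path hT u c
  obtain ⟨q, hq⟩ := exists_path hT c v
  calc d u v ≤ m ((p.append q).support.map l) := d_le_walk hd u v _
    _ ≤ max (d u c) (d c v) := by
        rw [hd.2 u c huc p hp, hd.2 c v hcv q hq]
        refine m_le (le_max_of_le_left (m_nonneg _)) fun a ha => ?_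
        rw [Walk.support_append, List.map_append] at ha
        rcases List.mem_append.mp ha with h | h
        · exact le_max_of_le_left (le_m h)
        · refine le_max_of_le_right (le_m ?_)
          obtain ⟨x, hx, rfl⟩ := List.mem_map.mp h
          exact List.mem_map_of_mem (f := l) (List.mem_of_mem_tail hx)

lemma label_le_d (hT : G.IsTree) (hd : PinnedDist G l d) {u v : V} (h : u ≠ v) :
    l u ≤ d u v ∧ l v ≤ d u v := by
  obtain ⟨p, hp⟩ := exists_path hT u v
  rw [hd.2 u v h p hp]
  exact ⟨le_m (List.mem_map_of_mem (f := l) p.start_mem_support),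
    le_m (List.mem_map_of_mem (f := l) p.end_mem_support)⟩

lemma mid_le_d (hd : PinnedDist G l d) {v w w' : V} (h1 : G.Adj v w) (h2 : G.Adj v w')
    (hne : w ≠ w') : l v ≤ d w w' := by
  have hp : (Walk.cons h1.symm (Walk.cons h2 Walk.nil)).IsPath := by
    simp [Walk.isPath_def, h1.ne', h2.ne, hne]
  rw [hd.2 w w' hne _ hp]
  apply le_m
  simp

lemma d_edge_lt (hd : PinnedDist G l d) {r : ℝ} (hr : 0 < r) {u w : V} (h : G.Adj u w)
    (hu : l u < r) (hw : l w < r) : d w u < r := by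
  have hp : (Walk.cons h.symm Walk.nil).IsPath := by
    simp [Walk.isPath_def, h.ne']
  rw [hd.2 w u h.ne' _ hp]
  apply m_lt hr
  intro a ha
  simp only [Walk.support_cons, Walk.support_nil, List.map_cons, List.map_nil,
    List.mem_cons, List.not_mem_nil, or_false] at ha
  rcases ha with rfl | rfl
  · exact hw
  · exact hu

end Stmt15Aux

open Stmt15Aux

theorem stmt15 {V : Type} {G : SimpleGraph V} (hT : G.IsTree)
    (l : V → ℝ) (hl : NondegLabeling G l) (d : V → V → ℝ) (hd : PinnedDist G l d) :
    TotallyBoundedWith d ↔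
      ((∀ ε : ℝ, 0 < ε → {v : V | ε ≤ l v}.Finite) ∧
        ∀ v : V, 0 < l v → (G.neighborSet v).Finite) := by
  classical
  constructor
  · intro hTB
    constructor
    · intro ε hε
      obtain ⟨S, hS⟩ := hTB ε hε
      refine Set.Finite.subset S.finite_toSet ?_
      intro v hv
      obtain ⟨c, hc, hdc⟩ := hS v
      have hcv : c = v := by
        by_contra hne
        have := (label_le_d hT hd hne).2
        simp only [Set.mem_setOf_eq] at hv
        linarith
      subst hcv
      exact hc
    · intro v hv
      obtain ⟨S, hS⟩ := hTB (l v) hv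
      choose f hfS hfd using hS
      have hinj : Set.InjOn f (G.neighborSet v) := by
        intro w hw w' hw' hft
        by_contra hne
        have h1 : l v ≤ d w w' := mid_le_d hd hw hw' hne
        have h2 : d w w' ≤ max (d w (f w)) (d (f w) w') := d_ultra hT hd w w' (f w)
        have h3 : d w (f w) < l v := by rw [d_symm hT hd]; exact hfd w
        have h4 : d (f w) w' < l v := by rw [hft]; exact hfd w'
        have := lt_of_le_of_lt h2 (max_lt h3 h4)
        linarith
      have himg : (f '' (G.neighborSet v)).Finite := by
        refine Set.Finite.subset S.finite_toSet ?_
        rintro _ ⟨u, _, rfl⟩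
        exact hfS u
      exact Set.Finite.of_finite_image himg hinj
  · rintro ⟨cond1, cond2⟩ r hr
    by_cases hH : ∃ v, r ≤ l v
    · obtain ⟨v₀, hv₀⟩ := hH
      have hfin : {v : V | r ≤ l v}.Finite := cond1 r hr
      have hSfin : ({v : V | r ≤ l v} ∪ ⋃ v ∈ {v : V | r ≤ l v}, G.neighborSet v).Finite :=
        hfin.union (Set.Finite.biUnion hfin fun v hv => cond2 v (lt_of_lt_of_le hr hv))
      refine ⟨hSfin.toFinset, fun u => ?_⟩
      have key : ∀ (v u : V) (p : G.Walk u v), p.IsPath → r ≤ l v →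
          ∃ c ∈ hSfin.toFinset, d c u < r := by
        intro v u p
        induction p with
        | nil =>
          intro _ hv
          refine ⟨_, ?_, by rw [hd.1]; exact hr⟩
          rw [Set.Finite.mem_toFinset]
          exact Or.inl hv
        | @cons a b v h q ih =>
          intro hp hv
          by_cases ha : r ≤ l a
          · refine ⟨a, ?_, by rw [hd.1]; exact hr⟩
            rw [Set.Finite.mem_toFinset]
            exact Or.inl ha
          · by_cases hb : r ≤ l b
            · refine ⟨a, ?_, by rw [hd.1]; exact hr⟩
              rw [Set.Finite.mem_toFinset]
              refine Or.inr (Set.mem_biUnion hb ?_)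
              exact h.symm
            · push_neg at ha hb
              obtain ⟨c, hc, hcb⟩ := ih hp.of_cons hv
              refine ⟨c, hc, ?_⟩
              have hba : d b a < r := d_edge_lt hd hr h ha hb
              exact lt_of_le_of_lt (d_ultra hT hd c a b) (max_lt hcb hba)
      obtain ⟨p, hp⟩ := exists_path hT u v₀
      exact key v₀ u p hp hv₀
    · push_neg at hH
      by_cases hV : Nonempty V
      · obtain ⟨v₀⟩ := hV
        refine ⟨{v₀}, fun u => ⟨v₀, Finset.mem_singleton_self v₀, ?_⟩⟩
        by_cases h : v₀ = u
        · subst h; rw [hd.1]; exact hr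
        · obtain ⟨p, hp⟩ := exists_path hT v₀ u
          rw [hd.2 v₀ u h p hp]
          apply m_lt hr
          intro a ha
          obtain ⟨x, _, rfl⟩ := List.mem_map.mp ha
          exact hH x
      · exact ⟨∅, fun u => absurd ⟨u⟩ hV⟩
end

section
/- Let T = T(l) be a labeled tree with non-degenerate labeling. The ultrametric space (V(T), d_l) is both discrete and totally bounded if and only if T is locally finite and the set V_ε = {v ∈ V(T) : l(v) ≥ ε} is finite for every ε > 0. -/
open SimpleGraph Filter

namespace Stmt17Aux

variable {V : Type} {G : SimpleGraph V} {l : V → ℝ} {d : V → V → ℝ}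

def Mx (l : V → ℝ) (L : List V) : ℝ := (L.map l).foldr max 0

lemma Mx_cons (a : V) (L : List V) : Mx l (a :: L) = max (l a) (Mx l L) := rfl

lemma Mx_nonneg (l : V → ℝ) (L : List V) : 0 ≤ Mx l L := by
  induction L with
  | nil => exact le_refl 0
  | cons a L ih => rw [Mx_cons]; exact le_max_of_le_right ih

lemma le_Mx {L : List V} {x : V} (hx : x ∈ L) : l x ≤ Mx l L := by
  induction L with
  | nil => simp at hx
  | cons a L ih =>
    rw [Mx_cons]
    rcases List.mem_cons.mp hx with h | h
    · subst h; exact le_max_left _ _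
    · exact le_max_of_le_right (ih h)

lemma Mx_le {L : List V} {r : ℝ} (hr : 0 ≤ r) (h : ∀ x ∈ L, l x ≤ r) : Mx l L ≤ r := by
  induction L with
  | nil => exact hr
  | cons a L ih =>
    rw [Mx_cons]
    exact max_le (h a (by simp)) (ih fun x hx => h x (by simp [hx]))

lemma Mx_lt {L : List V} {r : ℝ} (hr : 0 < r) (h : ∀ x ∈ L, l x < r) : Mx l L < r := by
  induction L with
  | nil => exact hr
  | cons a L ih =>
    rw [Mx_cons]
    exact max_lt (h a (by simp)) (ih fun x hx => h x (by simp [hx]))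

lemma Mx_mono {L L' : List V} (h : ∀ x ∈ L, x ∈ L') : Mx l L ≤ Mx l L' :=
  Mx_le (Mx_nonneg l L') fun x hx => le_Mx (h x hx)

lemma d_eq (hd : PinnedDist G l d) {u v : V} (h : u ≠ v) {p : G.Walk u v}
    (hp : p.IsPath) : d u v = Mx l p.support := hd.2 u v h p hp

lemma exists_path (hT : G.IsTree) (u v : V) : ∃ p : G.Walk u v, p.IsPath := by
  classical
  obtain ⟨w⟩ := hT.isConnected.preconnected u v
  exact ⟨w.bypass, w.bypass_isPath⟩

lemma d_nonneg (hT : G.IsTree) (hd : PinnedDist G l d) (u v : V) : 0 ≤ d u v := by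
  by_cases h : u = v
  · subst h; rw [hd.1]
  · obtain ⟨p, hp⟩ := exists_path hT u v
    rw [d_eq hd h hp]; exact Mx_nonneg l _

lemma d_symm (hT : G.IsTree) (hd : PinnedDist G l d) (u v : V) : d u v = d v u := by
  by_cases h : u = v
  · subst h; rfl
  · obtain ⟨p, hp⟩ := exists_path hT u v
    rw [d_eq hd h hp, d_eq hd (Ne.symm h) hp.reverse]
    refine le_antisymm (Mx_mono ?_) (Mx_mono ?_) <;>
      simp [SimpleGraph.Walk.support_reverse]

lemma d_le_walk (hd : PinnedDist G l d) {u v : V} (h : u ≠ v) (w : G.Walk u v) :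
    d u v ≤ Mx l w.support := by
  classical
  rw [d_eq hd h w.bypass_isPath]
  exact Mx_mono fun x hx => w.support_bypass_subset hx

lemma d_ultra (hT : G.IsTree) (hd : PinnedDist G l d) (u v c : V) :
    d u v ≤ max (d u c) (d c v) := by
  by_cases huv : u = v
  · subst huv; rw [hd.1]
    exact le_max_of_le_left (d_nonneg hT hd u c)
  by_cases hc : c = u
  · subst hc; exact le_max_right _ _
  by_cases hc' : c = v
  · subst hc'; exact le_max_left _ _
  obtain ⟨p, hp⟩ := exists_path hT u c
  obtain ⟨q, hq⟩ := exists_path hT c v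
  have h1 : d u v ≤ Mx l (p.append q).support := d_le_walk hd huv _
  have h2 : Mx l (p.append q).support ≤ max (Mx l p.support) (Mx l q.support) := by
    apply Mx_le (le_max_of_le_left (Mx_nonneg l _))
    intro x hx
    rcases (SimpleGraph.Walk.mem_support_append_iff p q).mp hx with h | h
    · exact le_max_of_le_left (le_Mx h)
    · exact le_max_of_le_right (le_Mx h)
  rw [d_eq hd (fun h => hc (h.symm)) hp, d_eq hd hc' hq]
  exact h1.trans h2

lemma d_adj (hd : PinnedDist G l d) (hl : NondegLabeling G l) {u v : V}
    (h : G.Adj u v) : d u v = max (l u) (l v) := by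
  have hp : (SimpleGraph.Walk.cons h SimpleGraph.Walk.nil).IsPath := by
    simp [SimpleGraph.Walk.cons_isPath_iff, h.ne]
  rw [d_eq hd h.ne hp]
  show max (l u) (max (l v) 0) = _
  rw [max_eq_left (hl.1 v)]

lemma le_d_left (hT : G.IsTree) (hd : PinnedDist G l d) {u v : V} (h : u ≠ v) :
    l u ≤ d u v := by
  obtain ⟨p, hp⟩ := exists_path hT u v
  rw [d_eq hd h hp]; exact le_Mx p.start_mem_support

lemma le_d_right (hT : G.IsTree) (hd : PinnedDist G l d) {u v : V} (h : u ≠ v) :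
    l v ≤ d u v := by
  obtain ⟨p, hp⟩ := exists_path hT u v
  rw [d_eq hd h hp]; exact le_Mx p.end_mem_support

end Stmt17Aux

theorem stmt17 {V : Type} {G : SimpleGraph V} (hT : G.IsTree)
    (l : V → ℝ) (hl : NondegLabeling G l) (d : V → V → ℝ) (hd : PinnedDist G l d) :
    (DiscreteWith d ∧ TotallyBoundedWith d) ↔
      ((∀ v : V, (G.neighborSet v).Finite) ∧
        ∀ ε : ℝ, 0 < ε → {v : V | ε ≤ l v}.Finite) := by
  classical
  constructor
  · rintro ⟨hdisc, htb⟩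
    have hlab : ∀ ε : ℝ, 0 < ε → {v : V | ε ≤ l v}.Finite := by
      intro ε hε
      obtain ⟨S, hS⟩ := htb ε hε
      refine S.finite_toSet.subset ?_
      intro v hv
      obtain ⟨c, hcS, hcv⟩ := hS v
      rcases eq_or_ne c v with rfl | hne
      · exact hcS
      · exact absurd hcv (not_lt.mpr (le_trans hv (Stmt17Aux.le_d_right hT hd hne)))
    refine ⟨?_, hlab⟩
    intro v
    obtain ⟨ε, hε, hεd⟩ := hdisc v
    by_cases hlv : l v < ε
    · refine (hlab ε hε).subset ?_
      intro u hu
      have hadj : G.Adj v u := hu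
      have h1 : ε ≤ d v u := hεd u hadj.ne'
      rw [Stmt17Aux.d_adj hd hl hadj] at h1
      rcases max_cases (l v) (l u) with ⟨he, _⟩ | ⟨he, _⟩
      · rw [he] at h1; exact absurd h1 (not_le.mpr hlv)
      · rw [he] at h1; exact h1
    · push_neg at hlv
      have hr : 0 < l v := lt_of_lt_of_le hε hlv
      obtain ⟨S, hS⟩ := htb (l v) hr
      set f : V → V := fun u => Classical.choose (hS u) with hf
      have hfS : ∀ u, f u ∈ S ∧ d (f u) u < l v := fun u => Classical.choose_spec (hS u)
      apply Set.Finite.of_finite_image (f := f)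
      · apply S.finite_toSet.subset
        rintro _ ⟨u, _, rfl⟩
        exact (hfS u).1
      · intro u hu u' hu' hfe
        by_contra hne
        have hvu : G.Adj v u := hu
        have hvu' : G.Adj v u' := hu'
        have h1 : d (f u) u < l v := (hfS u).2
        have h2 : d (f u) u' < l v := by rw [hfe]; exact (hfS u').2
        have hlow : d u u' < l v := by
          calc d u u' ≤ max (d u (f u)) (d (f u) u') := Stmt17Aux.d_ultra hT hd u u' (f u)
          _ = max (d (f u) u) (d (f u) u') := by rw [Stmt17Aux.d_symm hT hd u (f u)]
          _ < l v := max_lt h1 h2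
        have hp : (SimpleGraph.Walk.cons hvu.symm
            (SimpleGraph.Walk.cons hvu' SimpleGraph.Walk.nil)).IsPath := by
          simp [SimpleGraph.Walk.cons_isPath_iff, hvu.ne', hvu'.ne, hne]
        have heq := Stmt17Aux.d_eq hd hne hp
        have hge : l v ≤ d u u' := by
          rw [heq]
          exact Stmt17Aux.le_Mx (by simp)
        exact absurd hlow (not_lt.mpr hge)
  · rintro ⟨h1, h2⟩
    constructor
    · intro p
      by_cases hne : ((h1 p).toFinset).Nonempty
      · refine ⟨((h1 p).toFinset).inf' hne (fun u => max (l p) (l u)), ?_, ?_⟩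
        · rw [Finset.lt_inf'_iff]
          intro u hu
          exact hl.2 p u ((h1 p).mem_toFinset.mp hu)
        · intro x hx
          obtain ⟨w, hw⟩ := Stmt17Aux.exists_path hT p x
          have hpx : p ≠ x := Ne.symm hx
          cases w with
          | nil => exact absurd rfl hpx
          | cons h q =>
            rename_i b
            have hbN : b ∈ (h1 p).toFinset := (h1 p).mem_toFinset.mpr h
            refine le_trans (Finset.inf'_le _ hbN) ?_
            rw [Stmt17Aux.d_eq hd hpx hw]
            apply max_le
            · exact Stmt17Aux.le_Mx (SimpleGraph.Walk.start_mem_support _)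
            · exact Stmt17Aux.le_Mx (by
                rw [SimpleGraph.Walk.support_cons]
                exact List.mem_cons_of_mem _ q.start_mem_support)
      · refine ⟨1, one_pos, ?_⟩
        intro x hx
        exfalso
        obtain ⟨w, _⟩ := Stmt17Aux.exists_path hT p x
        cases w with
        | nil => exact hx rfl
        | cons h q => exact hne ⟨_, (h1 p).mem_toFinset.mpr h⟩
    · intro r hr
      cases isEmpty_or_nonempty V with
      | inl hemp => exact ⟨∅, fun v => (hemp.false v).elim⟩
      | inr hne =>
        obtain ⟨v₀⟩ := hne
        refine ⟨insert v₀ ((h2 r hr).toFinset ∪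
          (((h2 r hr).toFinset).biUnion fun w => (h1 w).toFinset)), ?_⟩
        intro v
        have key : ∀ (a b : V) (q : G.Walk a b), b ∈ insert v₀ ((h2 r hr).toFinset ∪
            (((h2 r hr).toFinset).biUnion fun w => (h1 w).toFinset)) →
            ∃ c ∈ insert v₀ ((h2 r hr).toFinset ∪
            (((h2 r hr).toFinset).biUnion fun w => (h1 w).toFinset)), d c a < r := by
          intro a b q
          induction q with
          | nil => exact fun hb => ⟨_, hb, by rw [hd.1]; exact hr⟩
          | @cons x y b' h q ih =>
            intro hb
            by_cases hx : r ≤ l x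
            · refine ⟨x, ?_, by rw [hd.1]; exact hr⟩
              exact Finset.mem_insert_of_mem
                (Finset.mem_union_left _ ((h2 r hr).mem_toFinset.mpr hx))
            by_cases hy : r ≤ l y
            · refine ⟨x, ?_, by rw [hd.1]; exact hr⟩
              refine Finset.mem_insert_of_mem (Finset.mem_union_right _ ?_)
              rw [Finset.mem_biUnion]
              exact ⟨y, (h2 r hr).mem_toFinset.mpr hy, (h1 y).mem_toFinset.mpr h.symm⟩
            · obtain ⟨c, hcS, hcb⟩ := ih hb
              refine ⟨c, hcS, ?_⟩
              have hu : d c x ≤ max (d c y) (d y x) := Stmt17Aux.d_ultra hT hd c x y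
              have hyx : d y x < r := by
                rw [Stmt17Aux.d_adj hd hl h.symm]
                exact max_lt (not_le.mp hy) (not_le.mp hx)
              exact lt_of_le_of_lt hu (max_lt hcb hyx)
        obtain ⟨w⟩ := hT.isConnected.preconnected v v₀
        exact key v v₀ w (Finset.mem_insert_self _ _)
end

section
/- Let T = T(l) be a labeled tree with non-degenerate labeling. The ultrametric space (V(T), d_l) is compact if and only if T is rayless, the set V_ε = {v ∈ V(T) : l(v) ≥ ε} is finite for every ε > 0, and every vertex v with l(v) > 0 has finite degree. -/
open SimpleGraph Filter

namespace Stmt18Aux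

/-! ### Folded maximum of a list of reals -/

def Mx (L : List ℝ) : ℝ := L.foldr max 0

lemma Mx_nonneg (L : List ℝ) : 0 ≤ Mx L := by
  induction L with
  | nil => simp [Mx]
  | cons a L ih => exact le_trans ih (le_max_right a _)

lemma le_Mx {L : List ℝ} {a : ℝ} (h : a ∈ L) : a ≤ Mx L := by
  induction L with
  | nil => simp at h
  | cons b L ih =>
    rcases List.mem_cons.mp h with rfl | h
    · exact le_max_left _ _
    · exact (ih h).trans (le_max_right _ _)

lemma Mx_le {L : List ℝ} {c : ℝ} (hc : 0 ≤ c) (h : ∀ a ∈ L, a ≤ c) : Mx L ≤ c := by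
  induction L with
  | nil => exact hc
  | cons b L ih => exact max_le (h b (by simp)) (ih fun a ha => h a (by simp [ha]))

lemma Mx_lt {L : List ℝ} {c : ℝ} (hc : 0 < c) (h : ∀ a ∈ L, a < c) : Mx L < c := by
  induction L with
  | nil => exact hc
  | cons b L ih => exact max_lt (h b (by simp)) (ih fun a ha => h a (by simp [ha]))

lemma Mx_mono {L₁ L₂ : List ℝ} (h : L₁ ⊆ L₂) : Mx L₁ ≤ Mx L₂ :=
  Mx_le (Mx_nonneg _) fun a ha => le_Mx (h ha)

lemma exists_ge_of_le_Mx {L : List ℝ} {c : ℝ} (hc : 0 < c) (h : c ≤ Mx L) : ∃ a ∈ L, c ≤ a := by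
  by_contra hno
  push_neg at hno
  exact absurd h (not_le.mpr (Mx_lt hc hno))

/-! ### The canonical path in a tree and basic properties of the pinned distance -/

variable {V : Type} {G : SimpleGraph V} {l : V → ℝ} {d : V → V → ℝ}

noncomputable def thePath (hP : ∀ u v : V, ∃! p : G.Walk u v, p.IsPath) (u v : V) :
    G.Walk u v := (hP u v).choose

lemma thePath_isPath (hP : ∀ u v : V, ∃! p : G.Walk u v, p.IsPath) (u v : V) :
    (thePath hP u v).IsPath := (hP u v).choose_spec.1

lemma thePath_unique (hP : ∀ u v : V, ∃! p : G.Walk u v, p.IsPath) {u v : V}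
    {q : G.Walk u v} (hq : q.IsPath) : q = thePath hP u v := (hP u v).choose_spec.2 q hq

lemma d_eq (hd : PinnedDist G l d) {u v : V} (hne : u ≠ v) {p : G.Walk u v} (hp : p.IsPath) :
    d u v = Mx (p.support.map l) := hd.2 u v hne p hp

lemma l_le_d (hd : PinnedDist G l d) (hP : ∀ u v : V, ∃! p : G.Walk u v, p.IsPath)
    {u v w : V} (hne : u ≠ v) (hw : w ∈ (thePath hP u v).support) : l w ≤ d u v := by
  rw [d_eq hd hne (thePath_isPath hP u v)]
  exact le_Mx (List.mem_map_of_mem (f := l) hw)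

lemma l_le_d_left (hd : PinnedDist G l d) (hP : ∀ u v : V, ∃! p : G.Walk u v, p.IsPath)
    {u v : V} (hne : u ≠ v) : l u ≤ d u v :=
  l_le_d hd hP hne (Walk.start_mem_support _)

lemma l_le_d_right (hd : PinnedDist G l d) (hP : ∀ u v : V, ∃! p : G.Walk u v, p.IsPath)
    {u v : V} (hne : u ≠ v) : l v ≤ d u v :=
  l_le_d hd hP hne (Walk.end_mem_support _)

lemma d_le_walk [DecidableEq V] (hd : PinnedDist G l d) {u v : V} (hne : u ≠ v)
    (w : G.Walk u v) : d u v ≤ Mx (w.support.map l) := by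
  rw [d_eq hd hne w.bypass_isPath]
  exact Mx_mono (List.map_subset l w.support_bypass_subset)

lemma d_nonneg (hd : PinnedDist G l d) (hP : ∀ u v : V, ∃! p : G.Walk u v, p.IsPath)
    (u v : V) : 0 ≤ d u v := by
  rcases eq_or_ne u v with rfl | hne
  · rw [hd.1]
  · rw [d_eq hd hne (thePath_isPath hP u v)]; exact Mx_nonneg _

lemma d_symm (hd : PinnedDist G l d) (hP : ∀ u v : V, ∃! p : G.Walk u v, p.IsPath)
    (u v : V) : d u v = d v u := by
  rcases eq_or_ne u v with rfl | hne
  · rfl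
  · rw [d_eq hd hne (thePath_isPath hP u v),
      d_eq hd hne.symm ((thePath_isPath hP u v).reverse)]
    apply le_antisymm <;>
    · apply Mx_mono
      intro a ha
      simp only [List.mem_map, Walk.support_reverse, List.mem_reverse] at ha ⊢
      exact ha

lemma d_ultra [DecidableEq V] (hd : PinnedDist G l d)
    (hP : ∀ u v : V, ∃! p : G.Walk u v, p.IsPath)
    (u v w : V) : d u w ≤ max (d u v) (d v w) := by
  rcases eq_or_ne u w with rfl | huw
  · rw [hd.1]; exact le_max_of_le_left (d_nonneg hd hP _ _)
  rcases eq_or_ne u v with rfl | huv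
  · exact le_max_right _ _
  rcases eq_or_ne v w with rfl | hvw
  · exact le_max_left _ _
  refine le_trans (d_le_walk hd huw ((thePath hP u v).append (thePath hP v w))) ?_
  apply Mx_le (le_max_of_le_left (d_nonneg hd hP _ _))
  intro a ha
  rw [Walk.support_append] at ha
  simp only [List.map_append, List.mem_append] at ha
  rcases ha with ha | ha
  · exact le_max_of_le_left (by rw [d_eq hd huv (thePath_isPath hP u v)]; exact le_Mx ha)
  · refine le_max_of_le_right ?_
    rw [d_eq hd hvw (thePath_isPath hP v w)]
    exact le_Mx (List.map_subset l (List.tail_subset _) ha)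

lemma d_pos (hd : PinnedDist G l d) (hl : NondegLabeling G l)
    (hP : ∀ u v : V, ∃! p : G.Walk u v, p.IsPath) {u v : V} (hne : u ≠ v) : 0 < d u v := by
  have hnil : ¬ (thePath hP u v).Nil := Walk.not_nil_of_ne hne
  have hadj : G.Adj u ((thePath hP u v).getVert 1) := Walk.adj_snd hnil
  have hmem : (thePath hP u v).getVert 1 ∈ (thePath hP u v).support := by
    rw [← Walk.cons_support_tail hnil]
    exact List.mem_cons_of_mem _ (Walk.start_mem_support _)
  calc (0:ℝ) < max (l u) (l ((thePath hP u v).getVert 1)) := hl.2 _ _ hadj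
    _ ≤ d u v := max_le (l_le_d_left hd hP hne) (l_le_d hd hP hne hmem)

lemma snd_mem_support_tail {u v : V} {p : G.Walk u v} (hnil : ¬ p.Nil) :
    p.getVert 1 ∈ p.support.tail := by
  rw [← Walk.support_tail_of_not_nil p hnil]
  exact Walk.start_mem_support _

lemma getVert_one_takeUntil [DecidableEq V] {u v w : V} {p : G.Walk u v}
    (h : w ∈ p.support) (hw : u ≠ w) : (p.takeUntil w h).getVert 1 = p.getVert 1 := by
  cases p with
  | nil => simp [Walk.mem_support_nil_iff] at h; exact absurd h.symm hw
  | cons r q =>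
    rw [Walk.takeUntil]
    rw [dif_neg hw]
    simp [Walk.getVert_cons_succ, Walk.getVert_zero]

/-- The second vertex of the canonical path from `a` to `b` (when `a ≠ b` and `a` lies on the
canonical path from `r` to `b`) is adjacent to `a`, lies on the path from `r` to `b`, and
is one step further away from `r` than `a`. -/
lemma child_spec [DecidableEq V] (hP : ∀ u v : V, ∃! p : G.Walk u v, p.IsPath)
    {r a b : V} (hmem : a ∈ (thePath hP r b).support) (hab : a ≠ b) :
    G.Adj a ((thePath hP a b).getVert 1) ∧
    (thePath hP a b).getVert 1 ∈ (thePath hP r b).support ∧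
    (thePath hP r ((thePath hP a b).getVert 1)).length = (thePath hP r a).length + 1 := by
  set q := thePath hP r b with hqdef
  have hq := thePath_isPath hP r b
  set dr := q.dropUntil a hmem with hdrdef
  have hdr : dr.IsPath := hq.dropUntil hmem
  have hdre : dr = thePath hP a b := thePath_unique hP hdr
  set t := q.takeUntil a hmem with htdef
  have ht : t.IsPath := hq.takeUntil hmem
  have hte : t = thePath hP r a := thePath_unique hP ht
  have hnil : ¬ dr.Nil := Walk.not_nil_of_ne hab
  have hc : (thePath hP a b).getVert 1 = dr.getVert 1 := by rw [hdre]
  have hadj : G.Adj a (dr.getVert 1) := Walk.adj_snd hnil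
  have htail : dr.getVert 1 ∈ dr.support.tail := snd_mem_support_tail hnil
  have hnodup := hq.support_nodup
  have hsupp : q.support = t.support ++ dr.support.tail := by
    conv_lhs => rw [← Walk.take_spec q hmem]
    rw [Walk.support_append]
  rw [hsupp] at hnodup
  have hdisj := (List.nodup_append'.mp hnodup).2.2
  have hnotmem : dr.getVert 1 ∉ t.support := fun hmem' => hdisj hmem' htail
  have hmem2 : dr.getVert 1 ∈ q.support := by
    rw [hsupp]; exact List.mem_append_right _ htail
  have hconcat : (t.concat hadj).IsPath := by
    rw [Walk.isPath_def, Walk.support_concat]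
    exact List.Nodup.append ht.support_nodup (List.nodup_singleton _)
      (fun a' h1 h2 => by
        rw [List.mem_singleton] at h2
        exact hnotmem (h2 ▸ h1))
  have hPe : thePath hP r (dr.getVert 1) = t.concat hadj := (thePath_unique hP hconcat).symm
  refine ⟨hc ▸ hadj, hc ▸ hmem2, ?_⟩
  rw [hc, hPe, Walk.length_concat, hte]

lemma getVert_one_eq_of_mem [DecidableEq V] (hP : ∀ u v : V, ∃! p : G.Walk u v, p.IsPath)
    {a b v : V} (hv : v ∈ (thePath hP a b).support) (hva : a ≠ v) :
    (thePath hP a v).getVert 1 = (thePath hP a b).getVert 1 := by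
  rw [← getVert_one_takeUntil hv hva]
  have : (thePath hP a b).takeUntil v hv = thePath hP a v :=
    thePath_unique hP ((thePath_isPath hP a b).takeUntil hv)
  rw [this]

/-! ### Walks along a ray -/

variable {x : ℕ → V}

def rayWalk (hadj : ∀ n, G.Adj (x n) (x (n+1))) (m : ℕ) : ∀ k, G.Walk (x m) (x (m+k))
  | 0 => Walk.nil
  | k+1 => (rayWalk hadj m k).concat (hadj (m+k))

lemma rayWalk_support (hadj : ∀ n, G.Adj (x n) (x (n+1))) (m k : ℕ) :
    (rayWalk hadj m k).support = (List.range (k+1)).map (fun i => x (m+i)) := by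
  induction k with
  | zero => simp [rayWalk, List.range_succ]
  | succ k ih =>
    rw [rayWalk, Walk.support_concat, ih, List.range_succ (n := k+1)]
    simp [List.concat_eq_append]

lemma rayWalk_support_tail (hadj : ∀ n, G.Adj (x n) (x (n+1))) (m k : ℕ) :
    (rayWalk hadj m k).support.tail = (List.range k).map (fun i => x (m+i+1)) := by
  rw [rayWalk_support, List.range_succ_eq_map]
  simp only [List.map_cons, List.tail_cons, List.map_map]
  rfl

end Stmt18Aux

open Stmt18Aux in
theorem stmt18 {V : Type} {G : SimpleGraph V} (hT : G.IsTree)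
    (l : V → ℝ) (hl : NondegLabeling G l) (d : V → V → ℝ) (hd : PinnedDist G l d) :
    SeqCompactWith d ↔
      ((¬ ∃ x : ℕ → V, IsRayIn G x) ∧
        (∀ ε : ℝ, 0 < ε → {v : V | ε ≤ l v}.Finite) ∧
        ∀ v : V, 0 < l v → (G.neighborSet v).Finite) := by
  classical
  obtain ⟨hNE, hP⟩ := isTree_iff_existsUnique_path.mp hT
  constructor
  · -- Sequential compactness implies the three conditions.
    intro hS
    refine ⟨?_, ?_, ?_⟩
    · -- no ray
      rintro ⟨x, hxinj, hxadj⟩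
      obtain ⟨a, φ, hφ, hcv⟩ := hS x
      set p₀ := thePath hP a (x 0) with hp₀
      have hKfin : (x ⁻¹' {v | v ∈ p₀.support}).Finite :=
        Set.Finite.preimage hxinj.injOn (p₀.support.finite_toSet)
      have h0K : 0 ∈ x ⁻¹' {v | v ∈ p₀.support} := Walk.end_mem_support p₀
      set k := hKfin.toFinset.max' ⟨0, hKfin.mem_toFinset.mpr h0K⟩ with hk
      have hkK : x k ∈ p₀.support := by
        have := Finset.max'_mem hKfin.toFinset ⟨0, hKfin.mem_toFinset.mpr h0K⟩
        rw [hKfin.mem_toFinset] at this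
        exact this
      have hkmax : ∀ j, x j ∈ p₀.support → j ≤ k :=
        fun j hj => Finset.le_max' _ j (hKfin.mem_toFinset.mpr hj)
      set δ := max (l (x k)) (l (x (k+1))) with hδdef
      have hδ : 0 < δ := hl.2 _ _ (hxadj k)
      obtain ⟨N, hN⟩ := hcv δ hδ
      set n := max N (k+1) with hn
      set m := φ n with hm
      have hkm : k + 1 ≤ m := le_trans (le_max_right N (k+1)) hφ.le_apply
      have hma : x m ≠ a := by
        intro h
        have : m ≤ k := hkmax m (by rw [h]; exact Walk.start_mem_support p₀)
        omega
      set t := p₀.takeUntil (x k) hkK with ht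
      set Wr := rayWalk hxadj k (m - k) with hWr
      have hxeq : x (k + (m - k)) = x m := congrArg x (Nat.add_sub_cancel' (by omega))
      set q : G.Walk a (x m) := (t.append Wr).copy rfl hxeq with hq
      have hqpath : q.IsPath := by
        rw [hq, Walk.isPath_copy, Walk.isPath_def, Walk.support_append]
        refine List.Nodup.append ((thePath_isPath hP a (x 0)).takeUntil hkK).support_nodup ?_ ?_
        · rw [rayWalk_support_tail]
          refine List.nodup_range.map ?_
          intro i j hij
          simp only at hij
          have := hxinj hij
          omega
        · intro b hb1 hb2
          rw [rayWalk_support_tail] at hb2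
          obtain ⟨i, hi, rfl⟩ := List.mem_map.mp hb2
          have hbp : x (k+i+1) ∈ p₀.support := Walk.support_takeUntil_subset _ _ hb1
          have := hkmax _ hbp
          omega
      have hdeq := hd.2 a (x m) (fun h => hma h.symm) q hqpath
      have hxk : x k ∈ q.support := by
        rw [hq, Walk.support_copy, Walk.support_append]
        exact List.mem_append_left _ (Walk.end_mem_support t)
      have hxk1 : x (k+1) ∈ q.support := by
        rw [hq, Walk.support_copy, Walk.support_append]
        refine List.mem_append_right _ ?_
        rw [rayWalk_support_tail]
        exact List.mem_map.mpr ⟨0, List.mem_range.mpr (by omega), by simp⟩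
      have hge : δ ≤ d a (x m) := by
        rw [hdeq]
        exact max_le (le_Mx (List.mem_map_of_mem (f := l) hxk)) (le_Mx (List.mem_map_of_mem (f := l) hxk1))
      have hlt : d (x m) a < δ := hN n (le_max_left _ _)
      rw [d_symm hd hP a (x m)] at hge
      exact absurd hlt (not_lt.mpr hge)
    · -- the sets V_ε are finite
      intro ε hε
      by_contra hinf
      have hinf' : {v : V | ε ≤ l v}.Infinite := hinf
      set y := hinf'.natEmbedding with hy
      set z : ℕ → V := fun n => (y n : V) with hz
      have hzinj : Function.Injective z := fun m n h => y.injective (Subtype.ext h)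
      have hzl : ∀ n, ε ≤ l (z n) := fun n => (y n).2
      obtain ⟨a, φ, hφ, hcv⟩ := hS z
      obtain ⟨N, hN⟩ := hcv ε hε
      have hone : z (φ N) ≠ a ∨ z (φ (N+1)) ≠ a := by
        by_contra hcon
        push_neg at hcon
        have : φ N = φ (N+1) := hzinj (hcon.1.trans hcon.2.symm)
        exact absurd this (Nat.ne_of_lt (hφ (Nat.lt_succ_self N)))
      rcases hone with h1 | h1
      · exact absurd (hN N le_rfl)
          (not_lt.mpr (le_trans (hzl _) (l_le_d_left hd hP h1)))
      · exact absurd (hN (N+1) (Nat.le_succ N))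
          (not_lt.mpr (le_trans (hzl _) (l_le_d_left hd hP h1)))
    · -- finite degrees at vertices with positive label
      intro v hv
      by_contra hinf
      have hinf' : (G.neighborSet v).Infinite := hinf
      set y := hinf'.natEmbedding with hy
      set z : ℕ → V := fun n => (y n : V) with hz
      have hzadj : ∀ n, G.Adj v (z n) := fun n => (y n).2
      have hzinj : Function.Injective z := fun m n h => y.injective (Subtype.ext h)
      have hlow : ∀ m n, m ≠ n → l v ≤ d (z m) (z n) := by
        intro m n hmn
        have hne : z m ≠ z n := fun h => hmn (hzinj h)
        have hp : (Walk.cons (hzadj m).symm (Walk.cons (hzadj n) Walk.nil)).IsPath := by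
          rw [Walk.isPath_def]
          simp [Walk.support_cons, (hzadj m).ne', (hzadj n).ne', (hzadj m).ne, (hzadj n).ne, hne]
        rw [hd.2 (z m) (z n) hne _ hp]
        apply le_Mx
        simp
      obtain ⟨a, φ, hφ, hcv⟩ := hS z
      obtain ⟨N, hN⟩ := hcv (l v) hv
      have h1 : d (z (φ N)) a < l v := hN N le_rfl
      have h2 : d (z (φ (N+1))) a < l v := hN (N+1) (Nat.le_succ N)
      have hne' : φ N ≠ φ (N+1) := Nat.ne_of_lt (hφ (Nat.lt_succ_self N))
      have h3 : d a (z (φ (N+1))) < l v := by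
        rw [d_symm hd hP a (z (φ (N+1)))]; exact h2
      have hu := d_ultra hd hP (z (φ N)) a (z (φ (N+1)))
      exact absurd (le_trans (hlow _ _ hne') hu) (not_le.mpr (max_lt h1 h3))
  · -- The three conditions imply sequential compactness.
    rintro ⟨hray, hfin, hdeg⟩
    intro x
    by_contra hx
    push_neg at hx
    -- all fibers are finite
    have hfib : ∀ v : V, {n | x n = v}.Finite := by
      intro v
      by_contra hvinf
      have hvinf' : {n | x n = v}.Infinite := hvinf
      obtain ⟨φ, hφ, hφv⟩ :=
        extraction_of_frequently_atTop (Nat.frequently_atTop_iff_infinite.mpr hvinf')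
      refine hx v φ hφ ?_
      intro ε hε
      refine ⟨0, fun n _ => ?_⟩
      show d (x (φ n)) v < ε
      rw [hφv n, hd.1 v]
      exact hε
    obtain ⟨r⟩ := hNE
    set D : V → Set ℕ := fun v => {n | v ∈ (thePath hP r (x n)).support} with hD
    -- the König step: from any vertex whose branch set is infinite, move one step deeper
    have step : ∀ a : V, (D a).Infinite →
        ∃ c, G.Adj a c ∧ (thePath hP r c).length = (thePath hP r a).length + 1 ∧
          (D c).Infinite := by
      intro a hDa
      set S := D a \ {n | x n = a} with hSdef
      have hSinf : S.Infinite := hDa.diff (hfib a)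
      set c : ℕ → V := fun n => (thePath hP a (x n)).getVert 1 with hc
      have key : ∀ n ∈ S, G.Adj a (c n) ∧ n ∈ D (c n) ∧
          (thePath hP r (c n)).length = (thePath hP r a).length + 1 := by
        intro n hn
        have hmem : a ∈ (thePath hP r (x n)).support := hn.1
        have hab : a ≠ x n := fun h => hn.2 h.symm
        exact child_spec hP hmem hab
      by_cases hA : ∃ c₀, (S ∩ {n | c n = c₀}).Infinite
      · obtain ⟨c₀, hc₀⟩ := hA
        obtain ⟨n, hn⟩ := hc₀.nonempty
        obtain ⟨hadj, hmem, hlen⟩ := key n hn.1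
        have hcn : c n = c₀ := hn.2
        refine ⟨c₀, hcn ▸ hadj, hcn ▸ hlen, ?_⟩
        refine Set.Infinite.mono ?_ hc₀
        rintro m ⟨hmS, hmc⟩
        have h1 := (key m hmS).2.1
        rwa [show c m = c₀ from hmc] at h1
      · push_neg at hA
        exfalso
        have hCinf : (c '' S).Infinite := by
          by_contra hCfin
          rw [Set.not_infinite] at hCfin
          exact hSinf ((hCfin.biUnion fun c₀ _ => hA c₀).subset
            (fun n hn => Set.mem_biUnion (Set.mem_image_of_mem c hn) ⟨hn, rfl⟩))
        have hCnb : c '' S ⊆ G.neighborSet a := by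
          rintro _ ⟨n, hn, rfl⟩
          exact (key n hn).1
        have hla : l a = 0 := by
          by_contra hla
          have hpos : 0 < l a := lt_of_le_of_ne (hl.1 a) (Ne.symm hla)
          exact hCinf ((hdeg a hpos).subset hCnb)
        have hfreq : ∀ K : ℕ, ∃ᶠ n in atTop, d (x n) a < 1/(K+1) := by
          intro K
          set ε := (1:ℝ)/(K+1) with hεdef
          have hε : (0:ℝ) < ε := by positivity
          rw [Nat.frequently_atTop_iff_infinite]
          set bad := S ∩ {n | ε ≤ d a (x n)} with hbad
          have hbadfin : bad.Finite := by
            refine Set.Finite.subset (Set.Finite.biUnion (hfin ε hε)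
              (fun v _ => hA ((thePath hP a v).getVert 1))) ?_
            rintro n ⟨hnS, hnd⟩
            have hna : a ≠ x n := fun h => hnS.2 h.symm
            have hdeq := d_eq hd hna (thePath_isPath hP a (x n))
            have hnd' : ε ≤ Mx (List.map l (thePath hP a (x n)).support) := by
              rw [← hdeq]; exact hnd
            obtain ⟨b, hb, hbε⟩ := exists_ge_of_le_Mx hε hnd'
            obtain ⟨v, hv, rfl⟩ := List.mem_map.mp hb
            have hvne : a ≠ v := by
              rintro rfl
              rw [hla] at hbε
              linarith
            refine Set.mem_biUnion (show v ∈ {v : V | ε ≤ l v} from hbε) ?_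
            refine ⟨hnS, ?_⟩
            show c n = (thePath hP a v).getVert 1
            exact (getVert_one_eq_of_mem hP hv hvne).symm
          have hgood : (S \ bad).Infinite := hSinf.diff hbadfin
          refine Set.Infinite.mono ?_ hgood
          rintro n ⟨hnS, hnbad⟩
          show d (x n) a < ε
          rw [← d_symm hd hP a (x n)]
          by_contra hge
          exact hnbad ⟨hnS, not_lt.mp hge⟩
        obtain ⟨φ, hφ, hφP⟩ := extraction_forall_of_frequently hfreq
        refine hx a φ hφ ?_
        intro ε hε
        obtain ⟨K, hK⟩ := exists_nat_gt (1/ε)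
        refine ⟨K, fun n hn => ?_⟩
        have h1 : d (x (φ n)) a < 1/(n+1) := hφP n
        have h2 : (1:ℝ)/(n+1) ≤ 1/(K+1) := by
          apply one_div_le_one_div_of_le (by positivity)
          have : (K:ℝ) ≤ (n:ℝ) := by exact_mod_cast hn
          linarith
        have h3 : (1:ℝ)/(K+1) < ε := by
          have h4 : (1:ℝ) < ((K:ℝ)+1) * ε := (div_lt_iff₀ hε).mp (lt_trans hK (by linarith))
          rw [div_lt_iff₀ (by positivity : (0:ℝ) < (K:ℝ)+1), mul_comm]
          exact h4
        show d (x (φ n)) a < ε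
        exact lt_of_lt_of_le h1 (le_trans h2 (le_of_lt h3))
    -- build a ray by iterating the step, contradicting raylessness
    have hDr : (D r).Infinite := by
      have : D r = Set.univ := Set.eq_univ_of_forall (fun n => Walk.start_mem_support _)
      rw [this]
      exact Set.infinite_univ
    have hlen0 : (thePath hP r r).length = 0 := by
      have h0 : (Walk.nil : G.Walk r r) = thePath hP r r := thePath_unique hP Walk.IsPath.nil
      rw [← h0]
      rfl
    set next : V → V := fun a => if h : (D a).Infinite then (step a h).choose else a
      with hnextdef
    set f : ℕ → V := fun i => Nat.rec r (fun _ a => next a) i with hfdef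
    have hfs : ∀ i, f (i+1) = next (f i) := fun _ => rfl
    have hnext : ∀ a, (h : (D a).Infinite) → G.Adj a (next a) ∧
        (thePath hP r (next a)).length = (thePath hP r a).length + 1 ∧
        (D (next a)).Infinite := by
      intro a h
      have he : next a = (step a h).choose := by rw [hnextdef]; exact dif_pos h
      rw [he]
      exact (step a h).choose_spec
    have hInv : ∀ i, (D (f i)).Infinite ∧ (thePath hP r (f i)).length = i := by
      intro i
      induction i with
      | zero => exact ⟨hDr, hlen0⟩
      | succ i ih =>
        obtain ⟨hadj, hlen, hinf⟩ := hnext (f i) ih.1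
        rw [hfs i]
        exact ⟨hinf, by rw [hlen, ih.2]⟩
    have hadjf : ∀ i, G.Adj (f i) (f (i+1)) := by
      intro i
      rw [hfs i]
      exact (hnext (f i) (hInv i).1).1
    have hinjf : Function.Injective f := by
      intro i j hij
      have h1 := (hInv i).2
      have h2 := (hInv j).2
      rw [hij] at h1
      exact h1.symm.trans h2
    exact hray ⟨f, hinjf, hadjf⟩
end

section
/- Let T be a tree. There exists a non-degenerate labeling l : V(T) → [0,∞) such that the ultrametric space (V(T), d_l) is compact if and only if T is rayless, V(T) is at most countable, and for every edge {x,y} ∈ E(T) at least one of the degrees of x and y is finite. -/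
open SimpleGraph Filter

set_option linter.unusedSectionVars false

section Aux
variable {V : Type} {G : SimpleGraph V}

/-! fold-max lemmas -/

lemma foldrMax_nonneg (xs : List ℝ) : 0 ≤ xs.foldr max 0 := by
  induction xs with
  | nil => simp
  | cons a t ih => exact le_trans ih (le_max_right _ _)

lemma le_foldrMax {xs : List ℝ} {a : ℝ} (h : a ∈ xs) : a ≤ xs.foldr max 0 := by
  induction xs with
  | nil => simp at h
  | cons b t ih =>
    rcases List.mem_cons.mp h with rfl | h
    · exact le_max_left _ _
    · exact le_trans (ih h) (le_max_right _ _)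

lemma foldrMax_le {xs : List ℝ} {c : ℝ} (hc : 0 ≤ c) (h : ∀ a ∈ xs, a ≤ c) :
    xs.foldr max 0 ≤ c := by
  induction xs with
  | nil => simpa
  | cons b t ih =>
    exact max_le (h b List.mem_cons_self) (ih fun a ha => h a (List.mem_cons_of_mem _ ha))

lemma foldrMax_lt {xs : List ℝ} {c : ℝ} (hc : 0 < c) (h : ∀ a ∈ xs, a < c) :
    xs.foldr max 0 < c := by
  induction xs with
  | nil => simpa
  | cons b t ih =>
    exact max_lt (h b List.mem_cons_self) (ih fun a ha => h a (List.mem_cons_of_mem _ ha))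

lemma foldrMax_le_foldrMax {xs ys : List ℝ} (h : xs ⊆ ys) :
    xs.foldr max 0 ≤ ys.foldr max 0 :=
  foldrMax_le (foldrMax_nonneg ys) fun a ha => le_foldrMax (h ha)

/-! the canonical path in a tree -/

noncomputable def thePath (hT : G.IsTree) (u v : V) : G.Walk u v :=
  (hT.existsUnique_path u v).choose

lemma thePath_isPath (hT : G.IsTree) (u v : V) : (thePath hT u v).IsPath :=
  (hT.existsUnique_path u v).choose_spec.1

lemma thePath_eq (hT : G.IsTree) {u v : V} (p : G.Walk u v) (hp : p.IsPath) :
    p = thePath hT u v :=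
  (hT.existsUnique_path u v).choose_spec.2 p hp

lemma thePath_takeUntil [DecidableEq V] (hT : G.IsTree) {s t u : V}
    (h : u ∈ (thePath hT s t).support) :
    (thePath hT s t).takeUntil u h = thePath hT s u :=
  thePath_eq hT _ ((thePath_isPath hT s t).takeUntil h)

lemma thePath_dropUntil [DecidableEq V] (hT : G.IsTree) {s t u : V}
    (h : u ∈ (thePath hT s t).support) :
    (thePath hT s t).dropUntil u h = thePath hT u t :=
  thePath_eq hT _ ((thePath_isPath hT s t).dropUntil h)

lemma thePath_split [DecidableEq V] (hT : G.IsTree) {s t u : V}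
    (h : u ∈ (thePath hT s t).support) :
    thePath hT s t = (thePath hT s u).append (thePath hT u t) := by
  conv_lhs => rw [← Walk.take_spec (thePath hT s t) h]
  rw [thePath_takeUntil hT h, thePath_dropUntil hT h]

lemma thePath_support_split [DecidableEq V] (hT : G.IsTree) {s t u : V}
    (h : u ∈ (thePath hT s t).support) :
    (thePath hT s t).support
      = (thePath hT s u).support ++ (thePath hT u t).support.tail := by
  conv_lhs => rw [thePath_split hT h, Walk.support_append]

/-- In a path `s → t` through `b`, a vertex `u` of the second half has `b` on `thePath s u`. -/
lemma mem_thePath_of_mem_second [DecidableEq V] (hT : G.IsTree) {s t b u : V}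
    (hb : b ∈ (thePath hT s t).support) (hu : u ∈ (thePath hT b t).support) :
    b ∈ (thePath hT s u).support := by
  by_cases hub : u = b
  · subst hub; exact Walk.end_mem_support _
  have hup : u ∈ (thePath hT s t).support := by
    rw [thePath_support_split hT hb]
    rcases List.mem_cons.mp ((thePath hT b t).support_eq_cons ▸ hu) with h | h
    · exact absurd h hub
    · exact List.mem_append_right _ h
  by_contra hbs
  -- then b is in the second half of the split at u
  have hbsecond : b ∈ (thePath hT u t).support := by
    have := (thePath_support_split hT hup) ▸ hb
    rcases List.mem_append.mp this with h | h
    · exact absurd h hbs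
    · exact List.mem_of_mem_tail h
  -- split thePath u t at b : u appears twice
  have hnodup : ((thePath hT u t).support).Nodup := (thePath_isPath hT u t).2
  rw [thePath_support_split hT hbsecond] at hnodup
  have hdisj := List.disjoint_of_nodup_append hnodup
  have hu1 : u ∈ (thePath hT u b).support := Walk.start_mem_support _
  have hu2 : u ∈ (thePath hT b t).support.tail := by
    rcases List.mem_cons.mp ((thePath hT b t).support_eq_cons ▸ hu) with h | h
    · exact absurd h hub
    · exact h
  exact hdisj hu1 hu2

lemma walk_append_left_cancel {a b c : V} {A : G.Walk a b} {B B' : G.Walk b c}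
    (h : A.append B = A.append B') : B = B' := by
  induction A with
  | nil => simpa using h
  | cons hadj A ih =>
    simp only [Walk.cons_append, Walk.cons.injEq, heq_eq_eq] at h
    exact ih h.2


variable [DecidableEq V] (hT : G.IsTree) {l : V → ℝ} {d : V → V → ℝ}
include hT

lemma dEq (hd : PinnedDist G l d) {u v : V} (h : u ≠ v) :
    d u v = ((thePath hT u v).support.map l).foldr max 0 :=
  hd.2 u v h _ (thePath_isPath hT u v)

lemma dLower (hd : PinnedDist G l d) {u v : V} (h : u ≠ v) {w : V}
    (hw : w ∈ (thePath hT u v).support) : l w ≤ d u v := by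
  rw [dEq hT hd h]
  exact le_foldrMax (List.mem_map_of_mem (f := l) hw)

lemma dNonneg (hd : PinnedDist G l d) (u v : V) : 0 ≤ d u v := by
  by_cases h : u = v
  · subst h; rw [hd.1]
  · rw [dEq hT hd h]; exact foldrMax_nonneg _

lemma dPos (hl : NondegLabeling G l) (hd : PinnedDist G l d) {u v : V} (h : u ≠ v) :
    0 < d u v := by
  have hnn : ¬ (thePath hT u v).Nil := SimpleGraph.Walk.not_nil_of_ne h
  obtain ⟨w, hadj, q, hq⟩ := SimpleGraph.Walk.not_nil_iff.mp hnn
  have h1 : u ∈ (thePath hT u v).support := Walk.start_mem_support _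
  have h2 : w ∈ (thePath hT u v).support := by
    rw [hq, Walk.support_cons]
    exact List.mem_cons_of_mem _ (Walk.start_mem_support _)
  calc 0 < max (l u) (l w) := hl.2 u w hadj
    _ ≤ d u v := max_le (dLower hT hd h h1) (dLower hT hd h h2)

lemma dSymm (hd : PinnedDist G l d) {u v : V} (h : u ≠ v) : d u v = d v u := by
  have hrev : (thePath hT u v).reverse = thePath hT v u :=
    thePath_eq hT _ ((thePath_isPath hT u v).reverse)
  rw [dEq hT hd h, dEq hT hd (Ne.symm h), ← hrev, Walk.support_reverse,
    List.map_reverse]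
  apply le_antisymm
  · exact foldrMax_le (foldrMax_nonneg _) fun a ha => le_foldrMax (List.mem_reverse.mpr ha)
  · exact foldrMax_le (foldrMax_nonneg _) fun a ha => le_foldrMax (List.mem_reverse.mp ha)

lemma dUltra (hd : PinnedDist G l d) {u v : V} (a : V) (h : u ≠ v) :
    d u v ≤ max (d u a) (d a v) := by
  by_cases hau : a = u
  · subst hau; exact le_trans (le_refl _) (le_max_right _ _)
  by_cases hav : a = v
  · subst hav; exact le_max_left _ _
  have hbp : ((thePath hT u a).append (thePath hT a v)).bypass = thePath hT u v :=
    thePath_eq hT _ (Walk.bypass_isPath _)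
  have hsub : (thePath hT u v).support ⊆
      (thePath hT u a).support ++ (thePath hT a v).support := by
    intro w hw
    rw [← hbp] at hw
    have := Walk.support_bypass_subset _ hw
    rcases (Walk.mem_support_append_iff _ _).mp this with h1 | h1
    · exact List.mem_append_left _ h1
    · exact List.mem_append_right _ h1
  rw [dEq hT hd h]
  refine foldrMax_le (le_trans (dNonneg hT hd u a) (le_max_left _ _)) ?_
  intro b hb
  obtain ⟨w, hw, rfl⟩ := List.mem_map.mp hb
  rcases List.mem_append.mp (hsub hw) with h1 | h1
  · exact le_trans (dLower hT hd (fun e => hau e.symm) h1) (le_max_left _ _)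
  · exact le_trans (dLower hT hd hav h1) (le_max_right _ _)


/-! ### Forward direction auxiliary lemmas -/

lemma sepFinite (hd : PinnedDist G l d)
    (hsc : SeqCompactWith d) {c : ℝ} (hc : 0 < c) {S : Set V}
    (hS : ∀ u ∈ S, ∀ v ∈ S, u ≠ v → c ≤ d u v) : S.Finite := by
  by_contra hinf
  have hinf : S.Infinite := hinf
  let y := hinf.natEmbedding
  obtain ⟨a, φ, hφ, ht⟩ := hsc fun n => (y n : V)
  set z : ℕ → V := fun n => ((y (φ n)) : V) with hz
  have hzinj : Function.Injective z := fun m n h =>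
    hφ.injective (y.injective (Subtype.coe_injective h))
  obtain ⟨N, hN⟩ := ht (c/2) (by linarith)
  have key : ∀ i j, N ≤ i → N ≤ j → i ≠ j → z i ≠ a → z j ≠ a → False := by
    intro i j hi hj hij hia hja
    have hmem : ∀ n, z n ∈ S := fun n => (y (φ n)).2
    have h1 : c ≤ d (z i) (z j) :=
      hS _ (hmem i) _ (hmem j) (fun e => hij (hzinj e))
    have h2 : d (z i) (z j) ≤ max (d (z i) a) (d a (z j)) :=
      dUltra hT hd a (fun e => hij (hzinj e))
    have h3 : d a (z j) = d (z j) a := dSymm hT hd (fun e => hja e.symm)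
    have h4 := hN i hi
    have h5 := hN j hj
    simp only [Function.comp] at h4 h5
    rw [h3] at h2
    have := le_trans h1 h2
    rcases max_cases (d (z i) a) (d (z j) a) with ⟨he, _⟩ | ⟨he, _⟩ <;>
      rw [he] at this <;> linarith
  by_cases hA : z N = a
  · have hB : z (N+1) ≠ a := fun e => by have := hzinj (e.trans hA.symm); omega
    have hC : z (N+2) ≠ a := fun e => by have := hzinj (e.trans hA.symm); omega
    exact key (N+1) (N+2) (by omega) (by omega) (by omega) hB hC
  · by_cases hB : z (N+1) = a
    · have hC : z (N+2) ≠ a := fun e => by have := hzinj (e.trans hB.symm); omega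
      exact key N (N+2) (by omega) (by omega) (by omega) hA hC
    · exact key N (N+1) (by omega) (by omega) (by omega) hA hB

omit hT

def rayWalk {x : ℕ → V} (hx : IsRayIn G x) : ∀ (k m : ℕ), G.Walk (x m) (x (m + k))
  | 0, m => Walk.nil
  | (k+1), m => (rayWalk hx k m).concat (hx.2 (m+k))

lemma rayWalk_support {x : ℕ → V} (hx : IsRayIn G x) (k m : ℕ) :
    (rayWalk hx k m).support = (List.range (k+1)).map (fun i => x (m+i)) := by
  induction k with
  | zero => simp [rayWalk, List.range_succ]
  | succ k ih =>
    rw [rayWalk, Walk.support_concat, ih]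
    conv_rhs => rw [List.range_succ]
    simp [List.concat_eq_append]

lemma rayWalk_isPath {x : ℕ → V} (hx : IsRayIn G x) (k m : ℕ) :
    (rayWalk hx k m).IsPath := by
  rw [Walk.isPath_def, rayWalk_support]
  exact List.nodup_range.map (fun i j h => Nat.add_left_cancel (hx.1 h))

lemma rayWalk_mem {x : ℕ → V} (hx : IsRayIn G x) {k m j : ℕ}
    (h1 : m ≤ j) (h2 : j ≤ m + k) : x j ∈ (rayWalk hx k m).support := by
  rw [rayWalk_support]
  exact List.mem_map.mpr ⟨j - m, List.mem_range.mpr (by omega), by congr 1; omega⟩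

include hT

lemma forward_rayless (hl : NondegLabeling G l) (hd : PinnedDist G l d)
    (hsc : SeqCompactWith d) {x : ℕ → V} (hx : IsRayIn G x) : False := by
  obtain ⟨a, φ, hφ, ht⟩ := hsc x
  by_cases ha : ∃ j, a = x j
  · obtain ⟨j, rfl⟩ := ha
    have hcpos : 0 < max (l (x j)) (l (x (j+1))) := hl.2 _ _ (hx.2 j)
    obtain ⟨N, hN⟩ := ht _ hcpos
    set n := max N (j+1) with hn
    have h1 : j + 1 ≤ φ n := le_trans (le_max_right _ _) hφ.le_apply
    have hne : x j ≠ x (φ n) := fun e => by have := hx.1 e; omega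
    have hrw : j + (φ n - j) = φ n := by omega
    have hP : rayWalk hx (φ n - j) j = thePath hT (x j) (x (j + (φ n - j))) :=
      thePath_eq hT _ (rayWalk_isPath hx _ _)
    have hrw2 : x (j + (φ n - j)) = x (φ n) := by rw [hrw]
    have hle : max (l (x j)) (l (x (j+1))) ≤ d (x j) (x (φ n)) := by
      rw [← hrw]
      refine max_le (dLower hT hd (hrw2 ▸ hne) ?_) (dLower hT hd (hrw2 ▸ hne) ?_) <;>
        rw [← hP]
      · exact rayWalk_mem hx (by omega) (by omega)
      · exact rayWalk_mem hx (by omega) (by omega)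
    have h4 := hN n (le_max_left _ _)
    simp only [Function.comp] at h4
    rw [dSymm hT hd (fun e => hne e.symm)] at h4
    linarith
  · push_neg at ha
    set q := thePath hT a (x 0) with hq
    have hSfin : {j | x j ∈ q.support}.Finite :=
      Set.Finite.preimage hx.1.injOn (q.support.finite_toSet)
    have hSne : ({j | x j ∈ q.support}).Nonempty := ⟨0, q.end_mem_support⟩
    set K := sSup {j | x j ∈ q.support} with hKdef
    have hK : x K ∈ q.support := Nat.sSup_mem hSne hSfin.bddAbove
    have hKmax : ∀ j, x j ∈ q.support → j ≤ K :=
      fun j hj => le_csSup hSfin.bddAbove hj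
    set r := q.takeUntil (x K) hK with hr
    have hr_path : r.IsPath := (thePath_isPath hT _ _).takeUntil hK
    have hronly : ∀ j, x j ∈ r.support → j = K := by
      intro j hj
      by_contra hne
      have hjK : j < K :=
        lt_of_le_of_ne (hKmax j (Walk.support_takeUntil_subset q hK hj)) hne
      have hdrop : q.dropUntil (x K) hK
          = ((rayWalk hx K 0).copy rfl (congrArg x (Nat.zero_add K))).reverse := by
        rw [thePath_dropUntil hT hK]
        refine (thePath_eq hT _ ?_).symm
        rw [Walk.isPath_def, Walk.support_reverse, Walk.support_copy]
        exact List.nodup_reverse.mpr (rayWalk_isPath hx K 0).2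
      have hmem : x j ∈ (q.dropUntil (x K) hK).support := by
        rw [hdrop, Walk.support_reverse, Walk.support_copy]
        exact List.mem_reverse.mpr (rayWalk_mem hx (by omega) (by omega))
      have hmemtail : x j ∈ (q.dropUntil (x K) hK).support.tail := by
        have hxne : x j ≠ x K := fun e => hne (hx.1 e)
        rcases List.mem_cons.mp
          (((q.dropUntil (x K) hK).support_eq_cons) ▸ hmem) with h | h
        · exact absurd h hxne
        · exact h
      have hnodup : q.support.Nodup := (thePath_isPath hT a (x 0)).2
      rw [← Walk.take_spec q hK, Walk.support_append] at hnodup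
      exact List.disjoint_of_nodup_append hnodup hj hmemtail
    have hcpos : 0 < max (l (x K)) (l (x (K+1))) := hl.2 _ _ (hx.2 K)
    have claim : ∀ k, 1 ≤ k → max (l (x K)) (l (x (K+1))) ≤ d a (x (K + k)) := by
      intro k hk
      set seg := rayWalk hx k K with hseg
      have hsegnodup := (rayWalk_isPath hx k K).2
      have hw : (r.append seg).IsPath := by
        rw [Walk.isPath_def, Walk.support_append]
        refine List.Nodup.append hr_path.2 ?_ ?_
        · rw [seg.support_eq_cons] at hsegnodup
          exact (List.nodup_cons.mp hsegnodup).2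
        · intro v hv1 hv2
          have hvtail : v ∈ seg.support.tail := hv2
          have hvK : v ≠ x K := by
            rw [seg.support_eq_cons] at hsegnodup
            intro e; subst e
            exact (List.nodup_cons.mp hsegnodup).1 hvtail
          have hvsup : v ∈ seg.support := List.mem_of_mem_tail hvtail
          rw [rayWalk_support] at hvsup
          obtain ⟨i, _, rfl⟩ := List.mem_map.mp hvsup
          have h0 := hronly _ hv1
          have hi0 : i = 0 := by omega
          subst hi0
          exact hvK rfl
      have heq : r.append seg = thePath hT a (x (K+k)) := thePath_eq hT _ hw
      have hne : a ≠ x (K+k) := ha _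
      refine max_le (dLower hT hd hne ?_) (dLower hT hd hne ?_) <;> rw [← heq]
      · exact (Walk.mem_support_append_iff _ _).mpr (Or.inl r.end_mem_support)
      · exact (Walk.mem_support_append_iff _ _).mpr
          (Or.inr (rayWalk_mem hx (by omega) (by omega)))
    obtain ⟨N, hN⟩ := ht _ hcpos
    set n := max N (K+1) with hn
    have h1 : K + 1 ≤ φ n := le_trans (le_max_right _ _) hφ.le_apply
    have h4 := hN n (le_max_left _ _)
    simp only [Function.comp] at h4
    have h5 := claim (φ n - K) (by omega)
    have hrw : K + (φ n - K) = φ n := by omega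
    rw [hrw] at h5
    rw [dSymm hT hd (ha (φ n))] at h5
    linarith

lemma dPairLower (hd : PinnedDist G l d) {u z z' : V}
    (h1 : G.Adj u z) (h2 : G.Adj u z') (hzz : z ≠ z') : l u ≤ d z z' := by
  have hp : (Walk.cons h1.symm (Walk.cons h2 Walk.nil)).IsPath := by
    simp [Walk.isPath_def, h1.ne', h2.ne, hzz]
  refine dLower hT hd hzz ?_
  rw [← thePath_eq hT _ hp]
  simp

lemma forward_countable (hl : NondegLabeling G l) (hd : PinnedDist G l d)
    (hsc : SeqCompactWith d) : Countable V := by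
  rw [← Set.countable_univ_iff]
  have hVp : {v : V | 0 < l v}.Countable := by
    have hsub : {v : V | 0 < l v} ⊆ ⋃ n : ℕ, {v : V | 1/(n+1) ≤ l v} := by
      intro v hv
      simp only [Set.mem_iUnion]
      obtain ⟨n, hn⟩ := exists_nat_one_div_lt (K := ℝ) (show 0 < l v from hv)
      exact ⟨n, le_of_lt hn⟩
    refine Set.Countable.mono hsub (Set.countable_iUnion fun n => Set.Finite.countable ?_)
    refine sepFinite hT hd hsc (c := 1/(n+1)) (by positivity) ?_
    intro u hu v hv huv
    exact le_trans hu (dLower hT hd huv (Walk.start_mem_support _))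
  have hNu : ∀ u : V, 0 < l u → {z | G.Adj u z}.Finite := by
    intro u hu
    refine sepFinite hT hd hsc hu ?_
    intro z hz z' hz' hne
    exact dPairLower hT hd hz hz' hne
  have hsingle : {v : V | ∀ w, ¬ G.Adj v w}.Subsingleton := by
    intro v hv v' hv'
    obtain ⟨p⟩ := hT.isConnected.preconnected v v'
    cases p with
    | nil => rfl
    | cons h q => exact absurd h (hv _)
  refine Set.Countable.mono ?_
    ((hVp.union (hVp.biUnion fun u hu => ((hNu u hu).countable))).union
      hsingle.countable)
  intro v _
  by_cases hlv : 0 < l v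
  · exact Or.inl (Or.inl hlv)
  · have hlv0 : l v = 0 := le_antisymm (not_lt.mp hlv) (hl.1 v)
    by_cases hnb : ∀ w, ¬ G.Adj v w
    · exact Or.inr hnb
    · push_neg at hnb
      obtain ⟨w, hw⟩ := hnb
      have hlw : 0 < l w := by
        have := hl.2 v w hw
        rw [hlv0] at this
        simpa using this
      exact Or.inl (Or.inr (Set.mem_biUnion hlw hw.symm))

lemma forward_degree (hl : NondegLabeling G l) (hd : PinnedDist G l d)
    (hsc : SeqCompactWith d) {u v : V} (h : G.Adj u v) :
    (G.neighborSet u).Finite ∨ (G.neighborSet v).Finite := by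
  rcases lt_max_iff.mp (hl.2 u v h) with hu | hv
  · left
    refine sepFinite hT hd hsc hu ?_
    intro z hz z' hz' hne
    exact dPairLower hT hd hz hz' hne
  · right
    refine sepFinite hT hd hsc hv ?_
    intro z hz z' hz' hne
    exact dPairLower hT hd hz hz' hne

/-! ### Backward direction: rooted tree structure -/

variable (ρ : V)

def IsChild (hT : G.IsTree) (ρ c w : V) : Prop :=
  G.Adj w c ∧ w ∈ (thePath hT ρ c).support

lemma childSupport [DecidableEq V] {c w : V} (h : IsChild hT ρ c w) :
    (thePath hT ρ c).support = (thePath hT ρ w).support ++ [c] := by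
  obtain ⟨hadj, hw⟩ := h
  have hwc : thePath hT w c = Walk.cons hadj Walk.nil :=
    (thePath_eq hT _ (by simp [Walk.isPath_def, hadj.ne])).symm
  conv_lhs => rw [← Walk.take_spec (thePath hT ρ c) hw]
  rw [Walk.support_append, thePath_takeUntil hT hw, thePath_dropUntil hT hw, hwc]
  simp

lemma childLength [DecidableEq V] {c w : V} (h : IsChild hT ρ c w) :
    (thePath hT ρ c).length = (thePath hT ρ w).length + 1 := by
  have h2 := congrArg List.length (childSupport hT ρ h)
  simp only [List.length_append, List.length_cons, List.length_nil] at h2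
  rw [Walk.length_support, Walk.length_support] at h2
  omega

lemma child_not_mem [DecidableEq V] {c w : V} (h : IsChild hT ρ c w) :
    c ∉ (thePath hT ρ w).support := by
  have hnd := (thePath_isPath hT ρ c).2
  rw [childSupport hT ρ h] at hnd
  exact fun hc => (List.disjoint_of_nodup_append hnd) hc (by simp)

omit hT in
lemma wf_of_no_chain {α : Type} {r : α → α → Prop}
    (h : ∀ f : ℕ → α, ¬ ∀ n, r (f (n+1)) (f n)) : WellFounded r := by
  by_contra hwf
  obtain ⟨a, ha⟩ : ∃ a, ¬ Acc r a := by
    by_contra h2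
    push_neg at h2
    exact hwf ⟨h2⟩
  have step : ∀ a, ¬ Acc r a → ∃ b, r b a ∧ ¬ Acc r b := by
    intro a ha
    by_contra h2
    push_neg at h2
    exact ha (Acc.intro a (fun b hb => by
      by_contra hacc
      exact hacc (h2 b hb)))
  choose g hg1 hg2 using step
  let F : {a // ¬ Acc r a} → {a // ¬ Acc r a} := fun p => ⟨g p.1 p.2, hg2 p.1 p.2⟩
  apply h (fun n => (F^[n] ⟨a, ha⟩).1)
  intro n
  rw [Function.iterate_succ_apply' F n _]
  exact hg1 _ _

lemma childWf [DecidableEq V] (Hray : ¬ ∃ x : ℕ → V, IsRayIn G x) :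
    WellFounded (fun c w => IsChild hT ρ c w) := by
  apply wf_of_no_chain
  intro f hchain
  have hlen : StrictMono (fun n => (thePath hT ρ (f n)).length) :=
    strictMono_nat_of_lt_succ (fun n => by rw [childLength hT ρ (hchain n)]; omega)
  exact Hray ⟨fun n => f n,
    fun m n e => hlen.injective (congrArg (fun v => (thePath hT ρ v).length) e),
    fun n => (hchain n).1⟩

lemma branchMem [DecidableEq V] {v w : V} (hw : w ∈ (thePath hT ρ v).support)
    (hvw : v ≠ w) :
    ∃ c, IsChild hT ρ c w ∧ c ∈ (thePath hT ρ v).support ∧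
      ∃ h : G.Adj w c, thePath hT w v = Walk.cons h (thePath hT c v) := by
  have hnn : ¬ (thePath hT w v).Nil := Walk.not_nil_of_ne (Ne.symm hvw)
  obtain ⟨c, hadj, q', hq'⟩ := Walk.not_nil_iff.mp hnn
  have hq'path : q'.IsPath := by
    have := thePath_isPath hT w v
    rw [hq'] at this
    exact this.of_cons
  have hq'eq : q' = thePath hT c v := thePath_eq hT _ hq'path
  have htail : (thePath hT w v).support.tail = q'.support := by
    rw [hq', Walk.support_cons, List.tail_cons]
  have hctail : c ∈ (thePath hT w v).support.tail := by
    rw [htail]; exact q'.start_mem_support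
  have hcsupp : c ∈ (thePath hT ρ v).support := by
    rw [thePath_support_split hT hw]
    exact List.mem_append_right _ hctail
  have hcnotin : c ∉ (thePath hT ρ w).support := by
    have hnd : (thePath hT ρ v).support.Nodup := (thePath_isPath hT ρ v).2
    rw [thePath_support_split hT hw] at hnd
    exact fun hcin => (List.disjoint_of_nodup_append hnd) hcin hctail
  have hpathc : ((thePath hT ρ w).concat hadj).IsPath := by
    rw [Walk.isPath_def, Walk.support_concat]
    refine List.Nodup.append (thePath_isPath hT ρ w).2 (List.nodup_singleton c) ?_
    intro b hb hb2
    rw [List.mem_singleton] at hb2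
    subst hb2
    exact hcnotin hb
  have hceq : (thePath hT ρ w).concat hadj = thePath hT ρ c := thePath_eq hT _ hpathc
  refine ⟨c, ⟨hadj, ?_⟩, hcsupp, hadj, by rw [hq', hq'eq]⟩
  rw [← hceq, Walk.support_concat]
  exact List.mem_append_left _ (thePath hT ρ w).end_mem_support

lemma childUnique [DecidableEq V] {v w c c' : V} (h1 : IsChild hT ρ c w)
    (h2 : IsChild hT ρ c' w) (m1 : c ∈ (thePath hT ρ v).support)
    (m2 : c' ∈ (thePath hT ρ v).support) (hvw : v ≠ w) : c = c' := by
  have hw : w ∈ (thePath hT ρ v).support := by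
    have hx : w ∈ (thePath hT ρ c).support := h1.2
    rw [← thePath_takeUntil hT m1] at hx
    exact Walk.support_takeUntil_subset _ _ hx
  obtain ⟨c0, hc0, hc0supp, hadj0, hcons⟩ := branchMem hT ρ hw hvw
  suffices hcl : ∀ e, IsChild hT ρ e w → e ∈ (thePath hT ρ v).support → e = c0 by
    rw [hcl c h1 m1, hcl c' h2 m2]
  intro e he hme
  by_contra hne
  have htail : (thePath hT w v).support.tail = (thePath hT c0 v).support := by
    rw [hcons, Walk.support_cons, List.tail_cons]
  have hsplit := thePath_support_split hT hw
  have hein : e ∈ (thePath hT c0 v).support := by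
    rw [← htail]
    rcases List.mem_append.mp (hsplit ▸ hme) with h | h
    · exact absurd h (child_not_mem hT ρ he)
    · exact h
  have hnec0 : c0 ≠ e := fun h => hne h.symm
  have hp : (Walk.cons hadj0.symm (Walk.cons he.1 Walk.nil)).IsPath := by
    simp [Walk.isPath_def, hadj0.ne', he.1.ne, hnec0]
  have hwc0e : w ∈ (thePath hT c0 e).support := by
    rw [← thePath_eq hT _ hp]
    simp
  have hwin : w ∈ (thePath hT c0 v).support := by
    rw [← thePath_takeUntil hT hein] at hwc0e
    exact Walk.support_takeUntil_subset _ _ hwc0e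
  have hnd : (thePath hT ρ v).support.Nodup := (thePath_isPath hT ρ v).2
  rw [hsplit] at hnd
  exact (List.disjoint_of_nodup_append hnd)
    (Walk.end_mem_support (thePath hT ρ w)) (htail ▸ hwin)

/-! ### Backward direction: main construction -/

omit hT in
lemma extract_subseq {P : ℕ → Prop} (hP : {n | P n}.Infinite) :
    ∃ φ : ℕ → ℕ, StrictMono φ ∧ ∀ n, P (φ n) := by
  apply Filter.extraction_of_frequently_atTop
  rw [Filter.frequently_atTop]
  intro N
  obtain ⟨b, hbP, hbN⟩ := hP.exists_gt N
  exact ⟨b, le_of_lt hbN, hbP⟩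

lemma backward_main [DecidableEq V]
    (Hray : ¬ ∃ x : ℕ → V, IsRayIn G x) (Hcnt : Countable V)
    (Hdeg : ∀ x y : V, G.Adj x y →
      (G.neighborSet x).Finite ∨ (G.neighborSet y).Finite) :
    ∃ l : V → ℝ, NondegLabeling G l ∧
      ∀ d : V → V → ℝ, PinnedDist G l d → SeqCompactWith d := by
  classical
  obtain ⟨f, hf⟩ := (countable_iff_exists_injective V).mp Hcnt
  set l : V → ℝ := fun v => if (G.neighborSet v).Infinite then 0 else (2⁻¹ : ℝ) ^ (f v)
    with hl_def
  have hl : NondegLabeling G l := by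
    constructor
    · intro v
      by_cases h : (G.neighborSet v).Infinite <;> simp [hl_def, h] <;> positivity
    · intro u v huv
      rcases Hdeg u v huv with h | h
      · refine lt_max_iff.mpr (Or.inl ?_)
        have he : l u = (2⁻¹:ℝ)^(f u) := by simp [hl_def, Set.not_infinite.mpr h]
        rw [he]; positivity
      · refine lt_max_iff.mpr (Or.inr ?_)
        have he : l v = (2⁻¹:ℝ)^(f v) := by simp [hl_def, Set.not_infinite.mpr h]
        rw [he]; positivity
  have hBfin : ∀ ε : ℝ, 0 < ε → {v : V | ε ≤ l v}.Finite := by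
    intro ε hε
    obtain ⟨M, hM⟩ := exists_pow_lt_of_lt_one hε (by norm_num : (2⁻¹:ℝ) < 1)
    refine Set.Finite.subset (Set.Finite.preimage hf.injOn (Set.finite_Iio M)) ?_
    intro v hv
    simp only [Set.mem_preimage, Set.mem_Iio]
    by_contra hMv
    push_neg at hMv
    have hle : l v ≤ (2⁻¹:ℝ) ^ (f v) := by
      by_cases h : (G.neighborSet v).Infinite <;> simp [hl_def, h] <;> positivity
    have h2 : (2⁻¹:ℝ)^(f v) ≤ (2⁻¹:ℝ)^M :=
      pow_le_pow_of_le_one (by norm_num) (by norm_num) hMv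
    have h3 : ε ≤ l v := hv
    linarith
  refine ⟨l, hl, ?_⟩
  intro d hd x
  set ρ := x 0 with hρ
  have main : ∀ w : V, ∀ y : ℕ → V, (∀ n, w ∈ (thePath hT ρ (y n)).support) →
      ∃ a, ∃ φ : ℕ → ℕ, StrictMono φ ∧ TendstoWith d (y ∘ φ) a := by
    intro w
    refine (childWf hT ρ Hray).induction
      (C := fun w => ∀ y : ℕ → V, (∀ n, w ∈ (thePath hT ρ (y n)).support) →
        ∃ a, ∃ φ : ℕ → ℕ, StrictMono φ ∧ TendstoWith d (y ∘ φ) a) w ?_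
    intro w IH y hy
    by_cases h1 : ∃ v, {n | y n = v}.Infinite
    · obtain ⟨v, hv⟩ := h1
      obtain ⟨φ, hφ, hφP⟩ := extract_subseq hv
      refine ⟨v, φ, hφ, ?_⟩
      intro ε hε
      exact ⟨0, fun n _ => by rw [Function.comp_apply, hφP n, hd.1]; exact hε⟩
    · by_cases h2 : ∃ c, IsChild hT ρ c w ∧
          {n | c ∈ (thePath hT ρ (y n)).support}.Infinite
      · obtain ⟨c, hc, hcinf⟩ := h2
        obtain ⟨φ, hφ, hφP⟩ := extract_subseq hcinf
        obtain ⟨a, ψ, hψ, hψt⟩ := IH c hc (y ∘ φ) (fun n => hφP n)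
        exact ⟨a, φ ∘ ψ, hφ.comp hψ, hψt⟩
      · push_neg at h1 h2
        have hfin1 : ∀ v, {n | y n = v}.Finite := fun v => h1 v
        have hfin2 : ∀ c, IsChild hT ρ c w →
            {n | c ∈ (thePath hT ρ (y n)).support}.Finite :=
          fun c hc => h2 c hc
        have hNinf : (G.neighborSet w).Infinite := by
          by_contra hfin
          rw [Set.not_infinite] at hfin
          have hchfin : {c | IsChild hT ρ c w}.Finite :=
            hfin.subset (fun c hc => hc.1)
          have hcover : (Set.univ : Set ℕ) ⊆ {n | y n = w} ∪
              ⋃ c ∈ {c | IsChild hT ρ c w},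
                {n | c ∈ (thePath hT ρ (y n)).support} := by
            intro n _
            by_cases hnw : y n = w
            · exact Or.inl hnw
            · obtain ⟨c, hc, hcs, _⟩ := branchMem hT ρ (hy n) hnw
              exact Or.inr (Set.mem_biUnion hc hcs)
          exact Set.infinite_univ (Set.Finite.subset
            ((hfin1 w).union (hchfin.biUnion (fun c hc => hfin2 c hc))) hcover)
        have hlw : l w = 0 := by simp [hl_def, hNinf]
        refine ⟨w, id, strictMono_id, ?_⟩
        intro ε hε
        have hBf := hBfin ε hε
        set Cb := {c | IsChild hT ρ c w ∧
          ∃ b, ε ≤ l b ∧ c ∈ (thePath hT ρ b).support} with hCb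
        have hCbfin : Cb.Finite := by
          have hsub : Cb ⊆ ⋃ b ∈ {v : V | ε ≤ l v},
              {c | IsChild hT ρ c w ∧ c ∈ (thePath hT ρ b).support} := by
            rintro c ⟨hc, b, hb, hcb⟩
            exact Set.mem_biUnion hb ⟨hc, hcb⟩
          refine Set.Finite.subset (hBf.biUnion ?_) hsub
          intro b _
          refine Set.Subsingleton.finite ?_
          rintro c1 ⟨hc1, hm1⟩ c2 ⟨hc2, hm2⟩
          by_cases hbw : b = w
          · subst hbw
            exact absurd hm1 (child_not_mem hT ρ hc1)
          · exact childUnique hT ρ hc1 hc2 hm1 hm2 hbw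
        set bad := {n | y n = w} ∪
          ⋃ c ∈ Cb, {n | c ∈ (thePath hT ρ (y n)).support} with hbad
        have hbadfin : bad.Finite :=
          (hfin1 w).union (hCbfin.biUnion (fun c hc => hfin2 c hc.1))
        obtain ⟨M, hM⟩ := hbadfin.bddAbove
        refine ⟨M + 1, fun n hn => ?_⟩
        have hnbad : n ∉ bad := fun h => by have := hM h; omega
        have hnw : y n ≠ w := fun h => hnbad (Or.inl h)
        obtain ⟨c, hc, hcs, hadj, hcons⟩ := branchMem hT ρ (hy n) hnw
        have hcCb : c ∉ Cb := fun hcC => hnbad (Or.inr (Set.mem_biUnion hcC hcs))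
        have hgood : ∀ u, c ∈ (thePath hT ρ u).support → l u < ε := by
          intro u hu
          by_contra hle
          push_neg at hle
          exact hcCb ⟨hc, u, hle, hu⟩
        have hdist : d ((y ∘ id) n) w
            = ((thePath hT w (y n)).support.map l).foldr max 0 := by
          have hsy : d (y n) w = d w (y n) := dSymm hT hd hnw
          rw [Function.comp_apply, id_eq, hsy, dEq hT hd (fun h => hnw h.symm)]
        rw [hdist, hcons, Walk.support_cons]
        refine foldrMax_lt hε ?_
        intro b hb
        obtain ⟨u, hu, rfl⟩ := List.mem_map.mp hb
        rcases List.mem_cons.mp hu with rfl | hu2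
        · rw [hlw]; exact hε
        · exact hgood u (mem_thePath_of_mem_second hT hcs hu2)
  obtain ⟨a, φ, hφ, htd⟩ := main ρ x (fun n => Walk.start_mem_support _)
  exact ⟨a, φ, hφ, htd⟩

end Aux

theorem stmt19 {V : Type} {G : SimpleGraph V} (hT : G.IsTree) :
    (∃ l : V → ℝ, NondegLabeling G l ∧
        ∀ d : V → V → ℝ, PinnedDist G l d → SeqCompactWith d) ↔
      ((¬ ∃ x : ℕ → V, IsRayIn G x) ∧ Countable V ∧
        ∀ x y : V, G.Adj x y →
          (G.neighborSet x).Finite ∨ (G.neighborSet y).Finite) := by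
  classical
  constructor
  · rintro ⟨l, hl, H⟩
    set d : V → V → ℝ := fun u v => if u = v then 0
      else ((thePath hT u v).support.map l).foldr max 0 with hd_def
    have hd : PinnedDist G l d := by
      constructor
      · intro u
        simp [hd_def]
      · intro u v h p hp
        simp only [hd_def]
        rw [if_neg h, ← thePath_eq hT p hp]
    have hsc := H d hd
    refine ⟨fun h => ?_, forward_countable hT hl hd hsc,
      fun a b h => forward_degree hT hl hd hsc h⟩
    obtain ⟨x, hx⟩ := h
    exact forward_rayless hT hl hd hsc hx
  · rintro ⟨Hray, Hcnt, Hdeg⟩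
    exact backward_main hT Hray Hcnt Hdeg
end
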